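/- arXiv:2104.01586 — 5 statements merged into one kernel-verified Lean document; each statement's English description precedes it below -/
import Mathlib

section
/- Let H be a real Hilbert space and let P, Q : H → H be continuous linear idempotents (P ∘ P = P, Q ∘ Q = Q) with ‖P − Q‖ < 1. Then the operator I − (P − Q)² is invertible in the bounded operators on H, the operator U := P ∘ Q + (I − P) ∘ (I − Q) is injective, and U maps the range of Q into the range of P (so U restricts to an injective linear map from range Q to range P). -/
/-- If `P`, `Q` are continuous linear idempotents on a real Hilbert space `H` with
`‖P − Q‖ < 1`, then `I − (P − Q)²` is invertible, `U := P ∘ Q + (I − P) ∘ (I − Q)` is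
injective, and `U` maps the range of `Q` into the range of `P`. -/
theorem close_idempotents {H : Type*} [NormedAddCommGroup H] [InnerProductSpace ℝ H]
    [CompleteSpace H] (P Q : H →L[ℝ] H)
    (hP : P.comp P = P) (hQ : Q.comp Q = Q) (hPQ : ‖P - Q‖ < 1) :
    IsUnit ((1 : H →L[ℝ] H) - (P - Q) ^ 2) ∧
      Function.Injective
        ⇑((P.comp Q + ((1 : H →L[ℝ] H) - P).comp (1 - Q) : H →L[ℝ] H)) ∧
      ∀ x ∈ LinearMap.range (Q : H →ₗ[ℝ] H),
        (P.comp Q + ((1 : H →L[ℝ] H) - P).comp (1 - Q) : H →L[ℝ] H) x ∈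
          LinearMap.range (P : H →ₗ[ℝ] H) := by
  have hP' : P * P = P := hP
  have hQ' : Q * Q = Q := hQ
  have hnorm : ‖(P - Q) ^ 2‖ < 1 := by
    calc ‖(P - Q) ^ 2‖ ≤ ‖P - Q‖ ^ 2 := norm_pow_le' _ (by norm_num)
    _ ≤ ‖P - Q‖ * 1 := by
        rw [sq]
        exact mul_le_mul_of_nonneg_left hPQ.le (norm_nonneg _)
    _ < 1 := by simpa using hPQ
  have hunit : IsUnit ((1 : H →L[ℝ] H) - (P - Q) ^ 2) :=
    (Units.oneSub _ hnorm).isUnit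
  refine ⟨hunit, ?_, ?_⟩
  · -- injectivity via left inverse
    set U : H →L[ℝ] H := P.comp Q + ((1 : H →L[ℝ] H) - P).comp (1 - Q) with hU
    set V : H →L[ℝ] H := Q.comp P + ((1 : H →L[ℝ] H) - Q).comp (1 - P) with hV
    have hPx : ∀ x : H →L[ℝ] H, P * (P * x) = P * x := fun x => by rw [← mul_assoc, hP']
    have hQx : ∀ x : H →L[ℝ] H, Q * (Q * x) = Q * x := fun x => by rw [← mul_assoc, hQ']
    have hVU : V * U = (1 : H →L[ℝ] H) - (P - Q) ^ 2 := by
      rw [show (V : H →L[ℝ] H) = Q * P + (1 - Q) * (1 - P) from rfl,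
          show (U : H →L[ℝ] H) = P * Q + (1 - P) * (1 - Q) from rfl]
      noncomm_ring
      simp only [mul_assoc, hPx, hQx, hP', hQ']
      abel
    obtain ⟨W, hW⟩ := hunit.exists_left_inv
    have hleft : (W * V) * U = 1 := by rw [mul_assoc, hVU, hW]
    intro x y hxy
    have := congrArg (W * V) hxy
    calc x = ((W * V) * U) x := by rw [hleft]; rfl
    _ = (W * V) (U y) := by simpa [ContinuousLinearMap.mul_apply] using this
    _ = ((W * V) * U) y := rfl
    _ = y := by rw [hleft]; rfl
  · rintro x ⟨y, rfl⟩
    refine ⟨Q y, ?_⟩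
    have hQy : Q (Q y) = Q y := by
      conv_rhs => rw [← hQ]
      rfl
    simp only [ContinuousLinearMap.add_apply, ContinuousLinearMap.coe_comp',
      Function.comp_apply, ContinuousLinearMap.sub_apply, ContinuousLinearMap.one_apply, hQy]
    simp [hQy]
end

section
/- Let H be a real Hilbert space and let a group G act on H by linear isometries; a continuous linear map T : H → H is called G-equivariant if T(g • u) = g • (T u) for all g ∈ G and u ∈ H. Let P, Q : H → H be orthogonal projections (selfadjoint continuous linear idempotents) of finite rank that are G-equivariant and satisfy ‖P − Q‖ < 1. Then there exists a continuous linear equivalence e from the range of P onto the range of Q such that e(g • x) = g • (e x) for all g ∈ G and all x in the range of P; that is, range P and range Q are isomorphic as G-representations. -/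
-- Auxiliary: if ‖P - Q‖ < 1, then Q restricted to range P is injective.
lemma aux_inj {H : Type*} [NormedAddCommGroup H] [InnerProductSpace ℝ H]
    (P Q : H →L[ℝ] H) (hPidem : P.comp P = P) (hnorm : ‖P - Q‖ < 1) :
    ∀ x : H, x ∈ LinearMap.range (P : H →ₗ[ℝ] H) → Q x = 0 → x = 0 := by
  intro x hx hQx
  obtain ⟨y, hy⟩ := hx
  rw [ContinuousLinearMap.coe_coe] at hy
  have hPx : P x = x := by
    rw [← hy, ← ContinuousLinearMap.comp_apply, hPidem]
  have h1 : ‖x‖ = ‖(P - Q) x‖ := by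
    simp [ContinuousLinearMap.sub_apply, hPx, hQx]
  have h2 : ‖(P - Q) x‖ ≤ ‖P - Q‖ * ‖x‖ := (P - Q).le_opNorm x
  by_contra hne
  have hxpos : 0 < ‖x‖ := norm_pos_iff.mpr hne
  nlinarith [h1, h2, hxpos, hnorm]

/-- Let a group `G` act on a real Hilbert space `H` by linear isometries. If `P`, `Q` are
`G`-equivariant finite rank orthogonal projections with `‖P − Q‖ < 1`, then the ranges of
`P` and `Q` are isomorphic as `G`-representations: there is a continuous linear
equivalence `e : range P ≃L[ℝ] range Q` with `e (g • x) = g • e x`. -/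
theorem close_equivariant_projections_iso_ranges {H : Type*} [NormedAddCommGroup H]
    [InnerProductSpace ℝ H] [CompleteSpace H]
    {G : Type*} [Group G] [DistribMulAction G H] [SMulCommClass G ℝ H]
    (hiso : ∀ (g : G) (x : H), ‖g • x‖ = ‖x‖)
    (P Q : H →L[ℝ] H)
    (hPsa : ∀ x y : H, inner ℝ (P x) y = (inner ℝ x (P y) : ℝ))
    (hQsa : ∀ x y : H, inner ℝ (Q x) y = (inner ℝ x (Q y) : ℝ))
    (hPidem : P.comp P = P) (hQidem : Q.comp Q = Q)
    (hPfin : FiniteDimensional ℝ (LinearMap.range (P : H →ₗ[ℝ] H)))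
    (hQfin : FiniteDimensional ℝ (LinearMap.range (Q : H →ₗ[ℝ] H)))
    (hPequiv : ∀ (g : G) (u : H), P (g • u) = g • P u)
    (hQequiv : ∀ (g : G) (u : H), Q (g • u) = g • Q u)
    (hnorm : ‖P - Q‖ < 1) :
    ∃ e : LinearMap.range (P : H →ₗ[ℝ] H) ≃L[ℝ] LinearMap.range (Q : H →ₗ[ℝ] H),
      ∀ (g : G) (x : H) (hx : x ∈ LinearMap.range (P : H →ₗ[ℝ] H))
        (hgx : g • x ∈ LinearMap.range (P : H →ₗ[ℝ] H)),
        (e ⟨g • x, hgx⟩ : H) = g • (e ⟨x, hx⟩ : H) := by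
  -- the linear map range P → range Q, x ↦ Q x
  let f : (LinearMap.range (P : H →ₗ[ℝ] H)) →ₗ[ℝ] (LinearMap.range (Q : H →ₗ[ℝ] H)) :=
    LinearMap.codRestrict (LinearMap.range (Q : H →ₗ[ℝ] H))
      ((Q : H →ₗ[ℝ] H).comp (LinearMap.range (P : H →ₗ[ℝ] H)).subtype)
      (fun x => ⟨x, rfl⟩)
  have hfinj : Function.Injective f := by
    intro a b hab
    have : Q ((a : H) - (b : H)) = 0 := by
      have := congrArg (Subtype.val) hab
      simp only [f, LinearMap.codRestrict_apply, LinearMap.comp_apply,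
        Submodule.coe_subtype, ContinuousLinearMap.coe_coe] at this
      rw [map_sub]
      exact sub_eq_zero.mpr this
    have := aux_inj P Q hPidem hnorm _ (sub_mem a.2 b.2) this
    exact Subtype.ext (sub_eq_zero.mp this)
  -- the other direction gives injectivity of P on range Q
  have hginj : ∀ x : H, x ∈ LinearMap.range (Q : H →ₗ[ℝ] H) → P x = 0 → x = 0 := by
    have : ‖Q - P‖ < 1 := by rwa [norm_sub_rev]
    exact aux_inj Q P hQidem this
  let g' : (LinearMap.range (Q : H →ₗ[ℝ] H)) →ₗ[ℝ] (LinearMap.range (P : H →ₗ[ℝ] H)) :=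
    LinearMap.codRestrict (LinearMap.range (P : H →ₗ[ℝ] H))
      ((P : H →ₗ[ℝ] H).comp (LinearMap.range (Q : H →ₗ[ℝ] H)).subtype)
      (fun x => ⟨x, rfl⟩)
  have hg'inj : Function.Injective g' := by
    intro a b hab
    have : P ((a : H) - (b : H)) = 0 := by
      have := congrArg (Subtype.val) hab
      simp only [g', LinearMap.codRestrict_apply, LinearMap.comp_apply,
        Submodule.coe_subtype, ContinuousLinearMap.coe_coe] at this
      rw [map_sub]
      exact sub_eq_zero.mpr this
    have := hginj _ (sub_mem a.2 b.2) this
    exact Subtype.ext (sub_eq_zero.mp this)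
  have hdim : Module.finrank ℝ (LinearMap.range (P : H →ₗ[ℝ] H))
      = Module.finrank ℝ (LinearMap.range (Q : H →ₗ[ℝ] H)) :=
    le_antisymm (LinearMap.finrank_le_finrank_of_injective hfinj)
      (LinearMap.finrank_le_finrank_of_injective hg'inj)
  let e₀ : (LinearMap.range (P : H →ₗ[ℝ] H)) ≃ₗ[ℝ] (LinearMap.range (Q : H →ₗ[ℝ] H)) :=
    LinearMap.linearEquivOfInjective f hfinj hdim
  refine ⟨e₀.toContinuousLinearEquiv, ?_⟩
  intro g x hx hgx
  have h1 : ∀ (z : LinearMap.range (P : H →ₗ[ℝ] H)),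
      ((e₀.toContinuousLinearEquiv z : H)) = Q (z : H) := fun z => rfl
  rw [h1, h1]
  exact hQequiv g x
end

section
/- Let H be a real Hilbert space and let a group G act on H by linear isometries; a continuous linear map T : H → H is called G-equivariant if T(g • u) = g • (T u) for all g ∈ G and u ∈ H. Let P : [0,1] → (H → H) be a norm-continuous path of continuous linear operators such that each P_t is a G-equivariant orthogonal projection of finite rank. Then there exists a continuous linear equivalence e from the range of P₀ onto the range of P₁ with e(g • x) = g • (e x) for all g ∈ G; that is, range P₀ and range P₁ are isomorphic as G-representations. -/
section Aux

variable {H : Type*} [NormedAddCommGroup H] [NormedSpace ℝ H]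
  (G : Type*) [Group G] [DistribMulAction G H] [SMulCommClass G ℝ H]

/-- An equivalence of submodules is `G`-equivariant. -/
def IsEquivarEquiv {A B : Submodule ℝ H} (e : A ≃L[ℝ] B) : Prop :=
  ∀ (g : G) (x : H) (hx : x ∈ A) (hgx : g • x ∈ A),
    (e ⟨g • x, hgx⟩ : H) = g • (e ⟨x, hx⟩ : H)

variable {G}

theorem IsEquivarEquiv.trans {A B C : Submodule ℝ H} {e₁ : A ≃L[ℝ] B} {e₂ : B ≃L[ℝ] C}
    (h₁ : IsEquivarEquiv G e₁) (h₂ : IsEquivarEquiv G e₂) :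
    IsEquivarEquiv G (e₁.trans e₂) := by
  intro g x hx hgx
  have hy : g • (e₁ ⟨x, hx⟩ : H) ∈ B := by
    rw [← h₁ g x hx hgx]; exact (e₁ ⟨g • x, hgx⟩).2
  have h1 : e₁ ⟨g • x, hgx⟩ = ⟨g • (e₁ ⟨x, hx⟩ : H), hy⟩ := Subtype.ext (h₁ g x hx hgx)
  have h2 := h₂ g (e₁ ⟨x, hx⟩ : H) (e₁ ⟨x, hx⟩).2 hy
  simp only [ContinuousLinearEquiv.trans_apply, h1]
  rw [show (⟨(e₁ ⟨x, hx⟩ : H), (e₁ ⟨x, hx⟩).2⟩ : B) = e₁ ⟨x, hx⟩ from rfl] at h2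
  exact h2

/-- If `x` is in the range of the idempotent `A` and `B x = 0` with `‖A - B‖ < 1`,
then `x = 0`. -/
theorem inj_aux (A B : H →L[ℝ] H) (hA : A.comp A = A) (hn : ‖A - B‖ < 1)
    {x : H} (hx : x ∈ LinearMap.range (A : H →ₗ[ℝ] H)) (h0 : B x = 0) : x = 0 := by
  obtain ⟨y, rfl⟩ := hx
  have hfix : A (A y) = A y := by
    conv_lhs => rw [← ContinuousLinearMap.comp_apply, hA]
  by_contra hne
  have h1 : ‖A y‖ = ‖(A - B) (A y)‖ := by
    simp only [ContinuousLinearMap.coe_coe] at h0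
    simp [h0, hfix]
  have h2 : ‖(A - B) (A y)‖ ≤ ‖A - B‖ * ‖A y‖ := (A - B).le_opNorm _
  have h3 : ‖A - B‖ * ‖A y‖ < 1 * ‖A y‖ :=
    mul_lt_mul_of_pos_right hn (norm_pos_iff.mpr hne)
  rw [one_mul] at h3
  linarith

/-- Main step: two nearby equivariant finite-rank idempotents have `G`-equivariantly
isomorphic ranges. -/
theorem step_iso (A B : H →L[ℝ] H) (hA : A.comp A = A) (hB : B.comp B = B)
    [FiniteDimensional ℝ (LinearMap.range (A : H →ₗ[ℝ] H))] [FiniteDimensional ℝ (LinearMap.range (B : H →ₗ[ℝ] H))]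
    (hAe : ∀ (g : G) (u : H), A (g • u) = g • A u)
    (hBe : ∀ (g : G) (u : H), B (g • u) = g • B u)
    (hn : ‖A - B‖ < 1) :
    ∃ e : LinearMap.range (A : H →ₗ[ℝ] H) ≃L[ℝ] LinearMap.range (B : H →ₗ[ℝ] H), IsEquivarEquiv G e := by
  -- the restriction of B to range A, valued in range B
  have hmemB : ∀ x ∈ LinearMap.range (A : H →ₗ[ℝ] H), (B : H →ₗ[ℝ] H) x ∈ LinearMap.range (B : H →ₗ[ℝ] H) :=
    fun x _ => ⟨x, rfl⟩
  have hmemA : ∀ x ∈ LinearMap.range (B : H →ₗ[ℝ] H), (A : H →ₗ[ℝ] H) x ∈ LinearMap.range (A : H →ₗ[ℝ] H) :=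
    fun x _ => ⟨x, rfl⟩
  set F : LinearMap.range (A : H →ₗ[ℝ] H) →ₗ[ℝ] LinearMap.range (B : H →ₗ[ℝ] H) :=
    (B : H →ₗ[ℝ] H).restrict hmemB with hF
  set F' : LinearMap.range (B : H →ₗ[ℝ] H) →ₗ[ℝ] LinearMap.range (A : H →ₗ[ℝ] H) :=
    (A : H →ₗ[ℝ] H).restrict hmemA with hF'
  have hFinj : Function.Injective F := by
    intro x y hxy
    apply Subtype.ext
    have h : B ((x : H) - (y : H)) = 0 := by
      have := congrArg (Subtype.val) hxy
      simp only [hF, LinearMap.restrict_apply, ContinuousLinearMap.coe_coe] at this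
      simp [map_sub, this]
    have hsub : (x : H) - (y : H) ∈ LinearMap.range (A : H →ₗ[ℝ] H) := sub_mem x.2 y.2
    have := inj_aux A B hA hn hsub h
    exact sub_eq_zero.mp this
  have hF'inj : Function.Injective F' := by
    intro x y hxy
    apply Subtype.ext
    have h : A ((x : H) - (y : H)) = 0 := by
      have := congrArg (Subtype.val) hxy
      simp only [hF', LinearMap.restrict_apply, ContinuousLinearMap.coe_coe] at this
      simp [map_sub, this]
    have hsub : (x : H) - (y : H) ∈ LinearMap.range (B : H →ₗ[ℝ] H) := sub_mem x.2 y.2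
    have hn' : ‖B - A‖ < 1 := by rwa [norm_sub_rev]
    have := inj_aux B A hB hn' hsub h
    exact sub_eq_zero.mp this
  have hdim : Module.finrank ℝ (LinearMap.range (A : H →ₗ[ℝ] H)) = Module.finrank ℝ (LinearMap.range (B : H →ₗ[ℝ] H)) :=
    le_antisymm (LinearMap.finrank_le_finrank_of_injective hFinj)
      (LinearMap.finrank_le_finrank_of_injective hF'inj)
  let e₀ : LinearMap.range (A : H →ₗ[ℝ] H) ≃ₗ[ℝ] LinearMap.range (B : H →ₗ[ℝ] H) :=
    F.linearEquivOfInjective hFinj hdim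
  refine ⟨e₀.toContinuousLinearEquiv, ?_⟩
  intro g x hx hgx
  have h1 : (e₀.toContinuousLinearEquiv ⟨g • x, hgx⟩ : H) = B (g • x) := rfl
  have h2 : (e₀.toContinuousLinearEquiv ⟨x, hx⟩ : H) = B x := rfl
  rw [h1, h2, hBe]

end Aux

/-- Let a group `G` act on a real Hilbert space `H` by linear isometries, and let
`P : [0,1] → L(H)` be a norm-continuous path such that each `P t` is a `G`-equivariant
finite rank orthogonal projection. Then the ranges of `P 0` and `P 1` are isomorphic as
`G`-representations: there is a continuous linear equivalence
`e : range (P 0) ≃L[ℝ] range (P 1)` with `e (g • x) = g • e x`. -/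
theorem path_of_equivariant_projections_iso_ranges {H : Type*} [NormedAddCommGroup H]
    [InnerProductSpace ℝ H] [CompleteSpace H]
    {G : Type*} [Group G] [DistribMulAction G H] [SMulCommClass G ℝ H]
    (hiso : ∀ (g : G) (x : H), ‖g • x‖ = ‖x‖)
    (P : ℝ → H →L[ℝ] H)
    (hPcont : ContinuousOn P (Set.Icc 0 1))
    (hPsa : ∀ t ∈ Set.Icc (0 : ℝ) 1, ∀ x y : H,
      inner ℝ ((P t) x) y = (inner ℝ x ((P t) y) : ℝ))
    (hPidem : ∀ t ∈ Set.Icc (0 : ℝ) 1, (P t).comp (P t) = P t)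
    (hPfin : ∀ t ∈ Set.Icc (0 : ℝ) 1, FiniteDimensional ℝ (LinearMap.range (P t : H →ₗ[ℝ] H)))
    (hPequiv : ∀ t ∈ Set.Icc (0 : ℝ) 1, ∀ (g : G) (u : H), (P t) (g • u) = g • (P t) u) :
    ∃ e : LinearMap.range (P 0 : H →ₗ[ℝ] H) ≃L[ℝ] LinearMap.range (P 1 : H →ₗ[ℝ] H),
      ∀ (g : G) (x : H) (hx : x ∈ LinearMap.range (P 0 : H →ₗ[ℝ] H))
        (hgx : g • x ∈ LinearMap.range (P 0 : H →ₗ[ℝ] H)),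
        (e ⟨g • x, hgx⟩ : H) = g • (e ⟨x, hx⟩ : H) := by
  -- uniform continuity of P on [0,1]
  have hUC : UniformContinuousOn P (Set.Icc 0 1) :=
    isCompact_Icc.uniformContinuousOn_of_continuous hPcont
  obtain ⟨δ, hδpos, hδ⟩ := (Metric.uniformContinuousOn_iff.mp hUC) 1 one_pos
  obtain ⟨n, hn⟩ := exists_nat_gt (1 / δ)
  have hnpos : (0 : ℝ) < n := lt_trans (by positivity) hn
  have hmem : ∀ k : ℕ, k ≤ n → ((k : ℝ) / n) ∈ Set.Icc (0 : ℝ) 1 := by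
    intro k hk
    constructor
    · positivity
    · rw [div_le_one hnpos]; exact_mod_cast hk
  have key : ∀ k : ℕ, k ≤ n →
      ∃ e : LinearMap.range (P 0 : H →ₗ[ℝ] H) ≃L[ℝ] LinearMap.range (P ((k : ℝ) / n) : H →ₗ[ℝ] H),
        IsEquivarEquiv G e := by
    intro k
    induction k with
    | zero =>
      intro _
      have h0 : ((0 : ℕ) : ℝ) / (n : ℝ) = 0 := by norm_num
      rw [h0]
      refine ⟨ContinuousLinearEquiv.refl ℝ _, fun g x hx hgx => ?_⟩
      simp [ContinuousLinearEquiv.refl_apply]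
    | succ k ih =>
      intro hk1
      obtain ⟨e, he⟩ := ih (Nat.le_of_succ_le hk1)
      have hk : k ≤ n := Nat.le_of_succ_le hk1
      have hmk := hmem k hk
      have hmk1 := hmem (k + 1) hk1
      haveI := hPfin _ hmk
      haveI := hPfin _ hmk1
      have hdist : dist ((k : ℝ) / n) (((k + 1 : ℕ) : ℝ) / n) < δ := by
        rw [Real.dist_eq]
        have : (k : ℝ) / n - ((k + 1 : ℕ) : ℝ) / n = -(1 / n) := by
          push_cast
          field_simp
          ring
        rw [this, abs_neg, abs_of_pos (by positivity)]
        rw [div_lt_iff₀ hnpos]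
        rw [div_lt_iff₀ hδpos] at hn
        nlinarith
      have hnorm : ‖P ((k : ℝ) / n) - P (((k + 1 : ℕ) : ℝ) / n)‖ < 1 := by
        have := hδ _ hmk _ hmk1 hdist
        rwa [dist_eq_norm] at this
      obtain ⟨e', he'⟩ := step_iso (G := G) (P ((k : ℝ) / n)) (P (((k + 1 : ℕ) : ℝ) / n))
        (hPidem _ hmk) (hPidem _ hmk1) (hPequiv _ hmk) (hPequiv _ hmk1) hnorm
      exact ⟨e.trans e', he.trans he'⟩
  have key' := key n le_rfl
  rw [div_self (ne_of_gt hnpos)] at key'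
  exact key'
end

section
/- Let N ∈ ℕ, let A : [0,1] → Matrix(N, N, ℝ) be continuous with each A(λ) symmetric and invertible, and let G be a group acting on ℝᴺ by orthogonal matrices such that every A(λ) commutes with the action of every g ∈ G. For a symmetric matrix B let E⁻(B) denote the sum of the eigenspaces of B for all negative eigenvalues. Then there exists a linear equivalence from E⁻(A(0)) onto E⁻(A(1)) that commutes with the action of every g ∈ G; that is, E⁻(A(0)) and E⁻(A(1)) are isomorphic as G-representations. -/
open Matrix

/-- For a real square matrix `B`, the sum of the eigenspaces of `B` for all negative
eigenvalues, as a subspace of `ι → ℝ`. -/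
noncomputable def negEigSpace {ι : Type*} [Fintype ι] [DecidableEq ι]
    (B : Matrix ι ι ℝ) : Submodule ℝ (ι → ℝ) :=
  ⨆ (μ : ℝ) (_ : μ < 0), Module.End.eigenspace (Matrix.toLin' B) μ

namespace NegEig
variable {N : ℕ} {B : Matrix (Fin N) (Fin N) ℝ}

/-- eigenvector columns -/
noncomputable def evec (hB : B.IsHermitian) (i : Fin N) : Fin N → ℝ := ⇑(hB.eigenvectorBasis i)

lemma vdot (hB : B.IsHermitian) (i j : Fin N) :
    evec hB i ⬝ᵥ evec hB j = if i = j then 1 else 0 := by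
  have h2 := congrFun (hB.star_eigenvectorUnitary_mulVec j) i
  simp [evec, mulVec, Matrix.star_eq_conjTranspose, conjTranspose_apply, dotProduct,
    hB.eigenvectorUnitary_apply, Pi.single_apply] at h2 ⊢
  rw [← h2]

lemma expand (hB : B.IsHermitian) (x : Fin N → ℝ) :
    ∑ i, (evec hB i ⬝ᵥ x) • evec hB i = x := by
  have h : (hB.eigenvectorUnitary : Matrix (Fin N) (Fin N) ℝ) *ᵥ
      ((star (hB.eigenvectorUnitary : Matrix (Fin N) (Fin N) ℝ)) *ᵥ x) = x := by
    rw [mulVec_mulVec]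
    have : (hB.eigenvectorUnitary : Matrix (Fin N) (Fin N) ℝ) *
        star (hB.eigenvectorUnitary : Matrix (Fin N) (Fin N) ℝ) = 1 :=
      Matrix.mem_unitaryGroup_iff.mp hB.eigenvectorUnitary.2
    rw [this, one_mulVec]
  funext k
  have h2 := congrFun h k
  simp only [evec, mulVec, Matrix.star_eq_conjTranspose, conjTranspose_apply, dotProduct,
    hB.eigenvectorUnitary_apply, Finset.sum_apply, Pi.smul_apply, smul_eq_mul, star_trivial,
    Finset.mul_sum] at h2 ⊢
  rw [← h2]
  exact Finset.sum_congr rfl fun i _ => by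
    rw [Finset.sum_mul]; exact Finset.sum_congr rfl fun j _ => by ring

lemma dotProduct_finsum {M : Type*} [Fintype M] (v : Fin N → ℝ) (f : M → Fin N → ℝ) :
    v ⬝ᵥ (∑ i, f i) = ∑ i, v ⬝ᵥ f i := by
  simp only [dotProduct, Finset.sum_apply, Finset.mul_sum]
  exact Finset.sum_comm

lemma finsum_dotProduct {M : Type*} [Fintype M] (v : Fin N → ℝ) (f : M → Fin N → ℝ) :
    (∑ i, f i) ⬝ᵥ v = ∑ i, f i ⬝ᵥ v := by
  simp only [dotProduct, Finset.sum_apply, Finset.sum_mul]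
  exact Finset.sum_comm

lemma coord_sum (hB : B.IsHermitian) (a : Fin N → ℝ) (j : Fin N) :
    evec hB j ⬝ᵥ (∑ i, a i • evec hB i) = a j := by
  rw [dotProduct_finsum]
  simp only [dotProduct_smul, vdot hB, smul_eq_mul, mul_ite, mul_one, mul_zero]
  simp

lemma dot_sums (hB : B.IsHermitian) (a b : Fin N → ℝ) :
    (∑ i, a i • evec hB i) ⬝ᵥ (∑ j, b j • evec hB j) = ∑ i, a i * b i := by
  rw [finsum_dotProduct]
  simp only [smul_dotProduct, smul_eq_mul]
  exact Finset.sum_congr rfl fun i _ => by rw [coord_sum hB]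

lemma mulVec_evec (hB : B.IsHermitian) (i : Fin N) :
    B *ᵥ evec hB i = hB.eigenvalues i • evec hB i := hB.mulVec_eigenvectorBasis i

lemma dotProduct_finsum' {M : Type*} (s : Finset M) (v : Fin N → ℝ) (f : M → Fin N → ℝ) :
    v ⬝ᵥ (∑ i ∈ s, f i) = ∑ i ∈ s, v ⬝ᵥ f i := by
  simp only [dotProduct, Finset.sum_apply, Finset.mul_sum]
  exact Finset.sum_comm

lemma symm_dot (hs : Bᵀ = B) (x y : Fin N → ℝ) :
    x ⬝ᵥ (B *ᵥ y) = (B *ᵥ x) ⬝ᵥ y := by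
  rw [dotProduct_mulVec, ← mulVec_transpose, hs]

lemma transpose_eq (hB : B.IsHermitian) : Bᵀ = B := by
  rw [← conjTranspose_eq_transpose_of_trivial]; exact hB

lemma mem_span_iff (hB : B.IsHermitian) (S : Set (Fin N)) (x : Fin N → ℝ) :
    x ∈ Submodule.span ℝ (evec hB '' S) ↔ ∀ i, i ∉ S → evec hB i ⬝ᵥ x = 0 := by
  constructor
  · intro hx i hi
    induction hx using Submodule.span_induction with
    | mem y hy =>
        obtain ⟨j, hj, rfl⟩ := hy
        rw [vdot hB, if_neg]
        rintro rfl; exact hi hj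
    | zero => simp
    | add y z _ _ hy' hz' => rw [dotProduct_add, hy', hz', add_zero]
    | smul a y _ hy' => rw [dotProduct_smul, hy', smul_zero]
  · intro h
    rw [← expand hB x]
    refine Submodule.sum_mem _ fun i _ => ?_
    by_cases hi : i ∈ S
    · exact Submodule.smul_mem _ _ (Submodule.subset_span ⟨i, hi, rfl⟩)
    · rw [h i hi, zero_smul]; exact Submodule.zero_mem _

/-- orthogonal projection onto the span of the eigenvectors indexed by `S` -/
noncomputable def proj (hB : B.IsHermitian) (S : Finset (Fin N)) :
    (Fin N → ℝ) →ₗ[ℝ] (Fin N → ℝ) where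
  toFun x := ∑ i ∈ S, (evec hB i ⬝ᵥ x) • evec hB i
  map_add' x y := by
    simp only [dotProduct_add, add_smul, Finset.sum_add_distrib]
  map_smul' a x := by
    simp only [dotProduct_smul, smul_eq_mul, RingHom.id_apply, Finset.smul_sum, smul_smul]

lemma proj_apply (hB : B.IsHermitian) (S : Finset (Fin N)) (x : Fin N → ℝ) :
    proj hB S x = ∑ i ∈ S, (evec hB i ⬝ᵥ x) • evec hB i := rfl

lemma coord_proj (hB : B.IsHermitian) (S : Finset (Fin N)) (x : Fin N → ℝ) (j : Fin N) :
    evec hB j ⬝ᵥ proj hB S x = if j ∈ S then evec hB j ⬝ᵥ x else 0 := by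
  rw [proj_apply, dotProduct_finsum']
  simp only [dotProduct_smul, vdot hB, smul_eq_mul, mul_ite, mul_one, mul_zero]
  rw [Finset.sum_ite_eq S j (fun i => evec hB i ⬝ᵥ x)]

lemma proj_mem (hB : B.IsHermitian) (S : Finset (Fin N)) (x : Fin N → ℝ) :
    proj hB S x ∈ Submodule.span ℝ (evec hB '' ↑S) := by
  rw [proj_apply]
  exact Submodule.sum_mem _ fun i hi =>
    Submodule.smul_mem _ _ (Submodule.subset_span ⟨i, hi, rfl⟩)

lemma proj_eq_self (hB : B.IsHermitian) (S : Finset (Fin N)) {x : Fin N → ℝ}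
    (hx : x ∈ Submodule.span ℝ (evec hB '' ↑S)) : proj hB S x = x := by
  have h := (mem_span_iff hB ↑S x).1 hx
  conv_rhs => rw [← expand hB x]
  rw [proj_apply]
  exact Finset.sum_subset (Finset.subset_univ S) fun i _ hi => by
    rw [h i (by simpa using hi), zero_smul]

lemma proj_eq_zero (hB : B.IsHermitian) (S : Finset (Fin N)) {x : Fin N → ℝ}
    (h : ∀ i ∈ S, evec hB i ⬝ᵥ x = 0) : proj hB S x = 0 := by
  rw [proj_apply]
  exact Finset.sum_eq_zero fun i hi => by rw [h i hi, zero_smul]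

lemma spanEig_eq (hB : B.IsHermitian) (P : ℝ → Prop) :
    (⨆ (μ : ℝ) (_ : P μ), Module.End.eigenspace (Matrix.toLin' B) μ)
      = Submodule.span ℝ (evec hB '' {i | P (hB.eigenvalues i)}) := by
  apply le_antisymm
  · refine iSup_le fun μ => iSup_le fun hμ w hw => ?_
    rw [Module.End.mem_eigenspace_iff, Matrix.toLin'_apply] at hw
    rw [mem_span_iff]
    intro i hi
    have h1 : evec hB i ⬝ᵥ (B *ᵥ w) = μ * (evec hB i ⬝ᵥ w) := by
      rw [hw, dotProduct_smul, smul_eq_mul]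
    have h2 : evec hB i ⬝ᵥ (B *ᵥ w) = hB.eigenvalues i * (evec hB i ⬝ᵥ w) := by
      rw [symm_dot (transpose_eq hB), mulVec_evec, smul_dotProduct, smul_eq_mul]
    have hne : hB.eigenvalues i ≠ μ := fun h => hi (by simp only [Set.mem_setOf_eq, h]; exact hμ)
    have := h1.symm.trans h2
    rcases mul_eq_mul_right_iff.1 this with h | h
    · exact absurd h.symm hne
    · exact h
  · rw [Submodule.span_le]
    rintro y ⟨i, hi, rfl⟩
    exact Submodule.mem_iSup_of_mem (hB.eigenvalues i) (Submodule.mem_iSup_of_mem hi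
      (by rw [Module.End.mem_eigenspace_iff, Matrix.toLin'_apply, mulVec_evec]))

noncomputable def delta (hB : B.IsHermitian) : ℝ :=
  (insert (1:ℝ) (Finset.univ.image fun i => |hB.eigenvalues i|)).min'
    (Finset.insert_nonempty _ _)

lemma delta_le (hB : B.IsHermitian) (i : Fin N) : delta hB ≤ |hB.eigenvalues i| :=
  Finset.min'_le _ _ (Finset.mem_insert.2
    (Or.inr (Finset.mem_image_of_mem _ (Finset.mem_univ i))))

lemma eigenvalues_ne_zero (hB : B.IsHermitian) (hinv : IsUnit B) (i : Fin N) :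
    hB.eigenvalues i ≠ 0 := by
  intro h0
  have hdet : B.det ≠ 0 := by
    have := (Matrix.isUnit_iff_isUnit_det _).1 hinv
    exact IsUnit.ne_zero this
  have hd := hB.det_eq_prod_eigenvalues
  rw [Finset.prod_eq_zero (Finset.mem_univ i) (by rw [h0]; norm_num)] at hd
  exact hdet hd

lemma delta_pos (hB : B.IsHermitian) (hinv : IsUnit B) : 0 < delta hB := by
  rw [show (0:ℝ) = 0 from rfl]
  apply (Finset.lt_min'_iff _ _).2
  intro b hb
  rcases Finset.mem_insert.1 hb with rfl | hb
  · exact one_pos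
  · obtain ⟨i, -, rfl⟩ := Finset.mem_image.1 hb
    exact abs_pos.2 (eigenvalues_ne_zero hB hinv i)

section WithNeg
open Matrix


variable {N : ℕ} {B C : Matrix (Fin N) (Fin N) ℝ}

noncomputable def negF (hB : B.IsHermitian) : Finset (Fin N) :=
  Finset.univ.filter (fun i => hB.eigenvalues i < 0)

lemma coe_negF (hB : B.IsHermitian) : (↑(negF hB) : Set (Fin N)) = {i | hB.eigenvalues i < 0} := by
  ext i; simp [negF]

lemma negEigSpace_eq (hB : B.IsHermitian) :
    negEigSpace B = Submodule.span ℝ (evec hB '' ↑(negF hB)) := by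
  rw [negEigSpace, spanEig_eq hB (fun μ => μ < 0), coe_negF]

lemma iSup_eig_inv (P : ℝ → Prop) (R : Matrix (Fin N) (Fin N) ℝ) (hc : R * B = B * R)
    {x : Fin N → ℝ} (hx : x ∈ ⨆ (μ : ℝ) (_ : P μ), Module.End.eigenspace (Matrix.toLin' B) μ) :
    R *ᵥ x ∈ ⨆ (μ : ℝ) (_ : P μ), Module.End.eigenspace (Matrix.toLin' B) μ := by
  have hle : Submodule.map (Matrix.toLin' R)
      (⨆ (μ : ℝ) (_ : P μ), Module.End.eigenspace (Matrix.toLin' B) μ)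
      ≤ ⨆ (μ : ℝ) (_ : P μ), Module.End.eigenspace (Matrix.toLin' B) μ := by
    rw [Submodule.map_iSup]
    refine iSup_le fun μ => ?_
    rw [Submodule.map_iSup]
    refine iSup_le fun hμ => le_iSup_of_le μ (le_iSup_of_le hμ ?_)
    rintro y ⟨w, hw, rfl⟩
    simp only [SetLike.mem_coe] at hw
    rw [Module.End.mem_eigenspace_iff, Matrix.toLin'_apply] at hw
    rw [Module.End.mem_eigenspace_iff, Matrix.toLin'_apply, Matrix.toLin'_apply,
      mulVec_mulVec, ← hc, ← mulVec_mulVec, hw, mulVec_smul]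
  exact hle ⟨x, hx, by rw [Matrix.toLin'_apply]⟩

lemma spanEig_inv (hB : B.IsHermitian) (P : ℝ → Prop) (R : Matrix (Fin N) (Fin N) ℝ)
    (hc : R * B = B * R) {x : Fin N → ℝ}
    (hx : x ∈ Submodule.span ℝ (evec hB '' {i | P (hB.eigenvalues i)})) :
    R *ᵥ x ∈ Submodule.span ℝ (evec hB '' {i | P (hB.eigenvalues i)}) := by
  rw [← spanEig_eq hB P] at hx ⊢
  exact iSup_eig_inv P R hc hx

lemma negEigSpace_inv (hB : B.IsHermitian) (R : Matrix (Fin N) (Fin N) ℝ)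
    (hc : R * B = B * R) {x : Fin N → ℝ} (hx : x ∈ negEigSpace B) :
    R *ᵥ x ∈ negEigSpace B := by
  rw [negEigSpace] at hx ⊢
  exact iSup_eig_inv _ R hc hx

lemma dot_self_eq (hB : B.IsHermitian) (x : Fin N → ℝ) :
    x ⬝ᵥ x = ∑ i, (evec hB i ⬝ᵥ x) ^ 2 := by
  have h := dot_sums hB (fun i => evec hB i ⬝ᵥ x) (fun i => evec hB i ⬝ᵥ x)
  rw [expand hB x] at h
  rw [h]
  exact Finset.sum_congr rfl fun i _ => (sq _).symm

lemma mulVec_expand (hB : B.IsHermitian) (x : Fin N → ℝ) :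
    B *ᵥ x = ∑ i, (hB.eigenvalues i * (evec hB i ⬝ᵥ x)) • evec hB i := by
  conv_lhs => rw [← expand hB x]
  rw [show B *ᵥ (∑ i, (evec hB i ⬝ᵥ x) • evec hB i)
      = B.mulVecLin (∑ i, (evec hB i ⬝ᵥ x) • evec hB i) from rfl, map_sum]
  refine Finset.sum_congr rfl fun i _ => ?_
  rw [LinearMap.map_smul, Matrix.mulVecLin_apply, mulVec_evec, smul_smul, mul_comm]

lemma mulVec_dot_eq (hB : B.IsHermitian) (x : Fin N → ℝ) :
    (B *ᵥ x) ⬝ᵥ x = ∑ i, hB.eigenvalues i * (evec hB i ⬝ᵥ x) ^ 2 := by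
  have h := dot_sums hB (fun i => hB.eigenvalues i * (evec hB i ⬝ᵥ x)) (fun i => evec hB i ⬝ᵥ x)
  rw [expand hB x, ← mulVec_expand hB x] at h
  rw [h]
  exact Finset.sum_congr rfl fun i _ => by ring

lemma dot_self_nonneg (x : Fin N → ℝ) : 0 ≤ x ⬝ᵥ x := by
  have : x ⬝ᵥ x = ∑ i, x i ^ 2 := by
    simp [dotProduct, sq]
  rw [this]
  exact Finset.sum_nonneg fun i _ => sq_nonneg _

lemma abs_dot_le (M : Matrix (Fin N) (Fin N) ℝ) (x : Fin N → ℝ) :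
    |(M *ᵥ x) ⬝ᵥ x| ≤ (∑ i, ∑ j, |M i j|) * (x ⬝ᵥ x) := by
  have hx2 : ∀ k, x k ^ 2 ≤ x ⬝ᵥ x := fun k => by
    have : x ⬝ᵥ x = ∑ i, x i ^ 2 := by simp [dotProduct, sq]
    rw [this]
    exact Finset.single_le_sum (f := fun i => x i ^ 2) (fun i _ => sq_nonneg _) (Finset.mem_univ k)
  have habs : ∀ i j, |x j * x i| ≤ x ⬝ᵥ x := fun i j => by
    have h1 := hx2 i
    have h2 := hx2 j
    have := abs_nonneg (x i)
    have := abs_nonneg (x j)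
    nlinarith [sq_nonneg (|x i| - |x j|), sq_abs (x i), sq_abs (x j), abs_mul (x j) (x i)]
  have h0 : (M *ᵥ x) ⬝ᵥ x = ∑ i, ∑ j, M i j * x j * x i := by
    simp [mulVec, dotProduct, Finset.sum_mul]
  rw [h0]
  calc |∑ i, ∑ j, M i j * x j * x i| ≤ ∑ i, |∑ j, M i j * x j * x i| :=
        Finset.abs_sum_le_sum_abs _ _
    _ ≤ ∑ i, ∑ j, |M i j * x j * x i| :=
        Finset.sum_le_sum fun i _ => Finset.abs_sum_le_sum_abs _ _
    _ ≤ ∑ i, ∑ j, |M i j| * (x ⬝ᵥ x) := by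
        refine Finset.sum_le_sum fun i _ => Finset.sum_le_sum fun j _ => ?_
        rw [mul_assoc, abs_mul]
        exact mul_le_mul_of_nonneg_left (habs i j) (abs_nonneg _)
    _ = (∑ i, ∑ j, |M i j|) * (x ⬝ᵥ x) := by
        rw [Finset.sum_mul]
        exact Finset.sum_congr rfl fun i _ => (Finset.sum_mul _ _ _).symm

lemma neg_bound (hB : B.IsHermitian) {x : Fin N → ℝ} (hx : x ∈ negEigSpace B) :
    (B *ᵥ x) ⬝ᵥ x ≤ -delta hB * (x ⬝ᵥ x) := by
  rw [mulVec_dot_eq hB, dot_self_eq hB, Finset.mul_sum]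
  rw [negEigSpace_eq hB, mem_span_iff hB] at hx
  refine Finset.sum_le_sum fun i _ => ?_
  by_cases hci : evec hB i ⬝ᵥ x = 0
  · rw [hci]; simp
  · have hi : hB.eigenvalues i < 0 := by
      by_contra h
      exact hci (hx i (by simp [negF, h]))
    have hle : hB.eigenvalues i ≤ -delta hB := by
      have := delta_le hB i
      rw [abs_of_neg hi] at this
      linarith
    exact mul_le_mul_of_nonneg_right hle (sq_nonneg _)

lemma pos_bound (hB : B.IsHermitian) (hinv : IsUnit B) {x : Fin N → ℝ}
    (hx : ∀ i, hB.eigenvalues i < 0 → evec hB i ⬝ᵥ x = 0) :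
    delta hB * (x ⬝ᵥ x) ≤ (B *ᵥ x) ⬝ᵥ x := by
  rw [mulVec_dot_eq hB, dot_self_eq hB, Finset.mul_sum]
  refine Finset.sum_le_sum fun i _ => ?_
  by_cases hci : evec hB i ⬝ᵥ x = 0
  · rw [hci]; simp
  · have hi : ¬ hB.eigenvalues i < 0 := fun h => hci (hx i h)
    have hpos : 0 < hB.eigenvalues i :=
      lt_of_le_of_ne (not_lt.1 hi) (Ne.symm (eigenvalues_ne_zero hB hinv i))
    have hle : delta hB ≤ hB.eigenvalues i := by
      have := delta_le hB i
      rw [abs_of_pos hpos] at this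
      exact this
    exact mul_le_mul_of_nonneg_right hle (sq_nonneg _)

lemma key_inj (hB : B.IsHermitian) (hC : C.IsHermitian) (hCinv : IsUnit C)
    (hsmall : ∑ i, ∑ j, |B i j - C i j| < delta hB + delta hC)
    {x : Fin N → ℝ} (hxB : x ∈ negEigSpace B)
    (hxC : ∀ i, hC.eigenvalues i < 0 → evec hC i ⬝ᵥ x = 0) : x = 0 := by
  by_contra hx0
  have ht : 0 < x ⬝ᵥ x :=
    lt_of_le_of_ne (dot_self_nonneg x) (Ne.symm fun h => hx0 (dotProduct_self_eq_zero.1 h))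
  have h1 := neg_bound hB hxB
  have h2 := pos_bound hC hCinv hxC
  have h3 := abs_dot_le (B - C) x
  have h4 : ((B - C) *ᵥ x) ⬝ᵥ x = (B *ᵥ x) ⬝ᵥ x - (C *ᵥ x) ⬝ᵥ x := by
    rw [sub_mulVec, sub_dotProduct]
  have h5 := neg_abs_le (((B - C) *ᵥ x) ⬝ᵥ x)
  simp only [Matrix.sub_apply] at h3
  have h6 : (∑ i, ∑ j, |B i j - C i j|) * (x ⬝ᵥ x) < (delta hB + delta hC) * (x ⬝ᵥ x) :=
    mul_lt_mul_of_pos_right hsmall ht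
  linarith


lemma proj_equivariant (hB : B.IsHermitian) (R : Matrix (Fin N) (Fin N) ℝ)
    (hc : R * B = B * R) (x : Fin N → ℝ) :
    proj hB (negF hB) (R *ᵥ x) = R *ᵥ (proj hB (negF hB) x) := by
  have hmema : proj hB (negF hB) x ∈ Submodule.span ℝ (evec hB '' ↑(negF hB)) :=
    proj_mem hB _ x
  have hb : x - proj hB (negF hB) x
      ∈ Submodule.span ℝ (evec hB '' {i | ¬ hB.eigenvalues i < 0}) := by
    rw [mem_span_iff hB]
    intro i hi
    have hineg : i ∈ negF hB := by
      simp only [Set.mem_setOf_eq, not_not] at hi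
      simp [negF, hi]
    rw [dotProduct_sub, coord_proj, if_pos hineg, sub_self]
  have hRb : R *ᵥ (x - proj hB (negF hB) x)
      ∈ Submodule.span ℝ (evec hB '' {i | ¬ hB.eigenvalues i < 0}) :=
    spanEig_inv hB (fun μ => ¬ μ < 0) R hc hb
  have hRa : R *ᵥ (proj hB (negF hB) x) ∈ Submodule.span ℝ (evec hB '' ↑(negF hB)) := by
    rw [coe_negF hB] at hmema ⊢
    exact spanEig_inv hB (fun μ => μ < 0) R hc hmema
  have hx2 : R *ᵥ x = R *ᵥ (proj hB (negF hB) x) + R *ᵥ (x - proj hB (negF hB) x) := by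
    rw [← mulVec_add, add_sub_cancel]
  have hz : proj hB (negF hB) (R *ᵥ (x - proj hB (negF hB) x)) = 0 := by
    refine proj_eq_zero hB _ fun i hi => ?_
    refine (mem_span_iff hB _ _).1 hRb i ?_
    simp only [Set.mem_setOf_eq, not_not]
    exact (Finset.mem_filter.1 hi).2
  rw [hx2, map_add, proj_eq_self hB _ hRa, hz, add_zero]
end WithNeg

section Equiv
variable {N : ℕ} {G : Type*} [Group G]

/-- equivariant isomorphism property -/
def Equi (ρ : G →* Matrix.orthogonalGroup (Fin N) ℝ) (W₁ W₂ : Submodule ℝ (Fin N → ℝ)) : Prop :=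
  ∃ e : W₁ ≃ₗ[ℝ] W₂, ∀ (g : G) (x : Fin N → ℝ) (hx : x ∈ W₁)
    (hgx : (ρ g : Matrix (Fin N) (Fin N) ℝ) *ᵥ x ∈ W₁),
    (e ⟨(ρ g : Matrix (Fin N) (Fin N) ℝ) *ᵥ x, hgx⟩ : Fin N → ℝ) =
      (ρ g : Matrix (Fin N) (Fin N) ℝ) *ᵥ (e ⟨x, hx⟩ : Fin N → ℝ)

lemma equi_refl (ρ : G →* Matrix.orthogonalGroup (Fin N) ℝ) (W : Submodule ℝ (Fin N → ℝ)) :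
    Equi ρ W W :=
  ⟨LinearEquiv.refl ℝ W, fun _ _ _ _ => rfl⟩

lemma equi_trans {ρ : G →* Matrix.orthogonalGroup (Fin N) ℝ}
    {W₁ W₂ W₃ : Submodule ℝ (Fin N → ℝ)}
    (h₁₂ : Equi ρ W₁ W₂) (h₂₃ : Equi ρ W₂ W₃) : Equi ρ W₁ W₃ := by
  obtain ⟨e, he⟩ := h₁₂
  obtain ⟨f, hf⟩ := h₂₃
  refine ⟨e.trans f, fun g x hx hgx => ?_⟩
  have h1 := he g x hx hgx
  have hmem : (ρ g : Matrix (Fin N) (Fin N) ℝ) *ᵥ (e ⟨x, hx⟩ : Fin N → ℝ) ∈ W₂ :=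
    h1 ▸ (e ⟨(ρ g : Matrix (Fin N) (Fin N) ℝ) *ᵥ x, hgx⟩).2
  have h2 := hf g (e ⟨x, hx⟩ : Fin N → ℝ) (e ⟨x, hx⟩).2 hmem
  have h3 : e ⟨(ρ g : Matrix (Fin N) (Fin N) ℝ) *ᵥ x, hgx⟩
      = ⟨(ρ g : Matrix (Fin N) (Fin N) ℝ) *ᵥ (e ⟨x, hx⟩ : Fin N → ℝ), hmem⟩ :=
    Subtype.ext h1
  show (f (e ⟨(ρ g : Matrix (Fin N) (Fin N) ℝ) *ᵥ x, hgx⟩) : Fin N → ℝ) = _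
  rw [h3, h2]
  rfl

lemma equi_symm {ρ : G →* Matrix.orthogonalGroup (Fin N) ℝ}
    {W₁ W₂ : Submodule ℝ (Fin N → ℝ)}
    (hinv : ∀ (g : G) (x : Fin N → ℝ), x ∈ W₁ → (ρ g : Matrix (Fin N) (Fin N) ℝ) *ᵥ x ∈ W₁)
    (h : Equi ρ W₁ W₂) : Equi ρ W₂ W₁ := by
  obtain ⟨e, he⟩ := h
  refine ⟨e.symm, fun g y hy hgy => ?_⟩
  set xs := e.symm ⟨y, hy⟩ with hxs
  have hgx : (ρ g : Matrix (Fin N) (Fin N) ℝ) *ᵥ (xs : Fin N → ℝ) ∈ W₁ := hinv g _ xs.2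
  have h1 := he g (xs : Fin N → ℝ) xs.2 hgx
  have h2 : e ⟨(xs : Fin N → ℝ), xs.2⟩ = ⟨y, hy⟩ := e.apply_symm_apply ⟨y, hy⟩
  rw [h2] at h1
  have h3 : (⟨(ρ g : Matrix (Fin N) (Fin N) ℝ) *ᵥ y, hgy⟩ : W₂)
      = e ⟨(ρ g : Matrix (Fin N) (Fin N) ℝ) *ᵥ (xs : Fin N → ℝ), hgx⟩ :=
    Subtype.ext h1.symm
  rw [h3, e.symm_apply_apply]

variable {B C : Matrix (Fin N) (Fin N) ℝ}

lemma local_equi (hB : B.IsHermitian) (hC : C.IsHermitian)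
    (hBinv : IsUnit B) (hCinv : IsUnit C)
    (ρ : G →* Matrix.orthogonalGroup (Fin N) ℝ)
    (hcommB : ∀ g : G, (ρ g : Matrix (Fin N) (Fin N) ℝ) * B = B * (ρ g : Matrix (Fin N) (Fin N) ℝ))
    (hcommC : ∀ g : G, (ρ g : Matrix (Fin N) (Fin N) ℝ) * C = C * (ρ g : Matrix (Fin N) (Fin N) ℝ))
    (hsmall : ∑ i, ∑ j, |B i j - C i j| < delta hB + delta hC) :
    Equi ρ (negEigSpace B) (negEigSpace C) := by
  have hmemC : ∀ x : Fin N → ℝ, proj hC (negF hC) x ∈ negEigSpace C := fun x => by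
    rw [negEigSpace_eq hC]; exact proj_mem hC _ x
  have hmemB : ∀ x : Fin N → ℝ, proj hB (negF hB) x ∈ negEigSpace B := fun x => by
    rw [negEigSpace_eq hB]; exact proj_mem hB _ x
  let φ : negEigSpace B →ₗ[ℝ] negEigSpace C :=
    LinearMap.codRestrict _ ((proj hC (negF hC)).comp (negEigSpace B).subtype)
      (fun x => hmemC x)
  let ψ : negEigSpace C →ₗ[ℝ] negEigSpace B :=
    LinearMap.codRestrict _ ((proj hB (negF hB)).comp (negEigSpace C).subtype)
      (fun x => hmemB x)
  have hφinj : Function.Injective φ := by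
    rw [← LinearMap.ker_eq_bot, LinearMap.ker_eq_bot']
    rintro ⟨x, hx⟩ h
    have hval : proj hC (negF hC) x = 0 := congrArg Subtype.val h
    have hcoords : ∀ i, hC.eigenvalues i < 0 → evec hC i ⬝ᵥ x = 0 := by
      intro i hi
      have h2 : evec hC i ⬝ᵥ proj hC (negF hC) x = 0 := by rw [hval]; simp
      rw [coord_proj, if_pos (by simp [negF, hi])] at h2
      exact h2
    exact Subtype.ext (key_inj hB hC hCinv hsmall hx hcoords)
  have hψinj : Function.Injective ψ := by
    rw [← LinearMap.ker_eq_bot, LinearMap.ker_eq_bot']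
    rintro ⟨x, hx⟩ h
    have hval : proj hB (negF hB) x = 0 := congrArg Subtype.val h
    have hcoords : ∀ i, hB.eigenvalues i < 0 → evec hB i ⬝ᵥ x = 0 := by
      intro i hi
      have h2 : evec hB i ⬝ᵥ proj hB (negF hB) x = 0 := by rw [hval]; simp
      rw [coord_proj, if_pos (by simp [negF, hi])] at h2
      exact h2
    have hsmall' : ∑ i, ∑ j, |C i j - B i j| < delta hC + delta hB := by
      have : ∀ i j, |C i j - B i j| = |B i j - C i j| := fun i j => abs_sub_comm _ _
      simp only [this]
      linarith
    exact Subtype.ext (key_inj hC hB hBinv hsmall' hx hcoords)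
  have hrank : Module.finrank ℝ (negEigSpace B) = Module.finrank ℝ (negEigSpace C) :=
    le_antisymm (LinearMap.finrank_le_finrank_of_injective hφinj)
      (LinearMap.finrank_le_finrank_of_injective hψinj)
  have hφsurj : Function.Surjective φ :=
    (LinearMap.injective_iff_surjective_of_finrank_eq_finrank hrank).1 hφinj
  refine ⟨LinearEquiv.ofBijective φ ⟨hφinj, hφsurj⟩, fun g x hx hgx => ?_⟩
  show proj hC (negF hC) ((ρ g : Matrix (Fin N) (Fin N) ℝ) *ᵥ x)
      = (ρ g : Matrix (Fin N) (Fin N) ℝ) *ᵥ (proj hC (negF hC) x)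
  exact proj_equivariant hC _ (hcommC g) x

end Equiv

theorem main_thm (N : ℕ) {G : Type*} [Group G]
    (ρ : G →* Matrix.orthogonalGroup (Fin N) ℝ)
    (A : ℝ → Matrix (Fin N) (Fin N) ℝ)
    (hAcont : ContinuousOn A (Set.Icc 0 1))
    (hAsymm : ∀ lam ∈ Set.Icc (0 : ℝ) 1, (A lam).IsSymm)
    (hAinv : ∀ lam ∈ Set.Icc (0 : ℝ) 1, IsUnit (A lam))
    (hcomm : ∀ (g : G), ∀ lam ∈ Set.Icc (0 : ℝ) 1,
      (ρ g : Matrix (Fin N) (Fin N) ℝ) * A lam = A lam * (ρ g : Matrix (Fin N) (Fin N) ℝ)) :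
    Equi ρ (negEigSpace (A 0)) (negEigSpace (A 1)) := by
  have hherm : ∀ lam ∈ Set.Icc (0:ℝ) 1, (A lam).IsHermitian := fun lam hlam => by
    show (A lam)ᴴ = A lam
    rw [conjTranspose_eq_transpose_of_trivial]
    exact hAsymm lam hlam
  have hloc : ∀ μ, ∀ hμ : μ ∈ Set.Icc (0:ℝ) 1, ∃ ε > 0, ∀ t, ∀ ht : t ∈ Set.Icc (0:ℝ) 1,
      |t - μ| < ε → Equi ρ (negEigSpace (A t)) (negEigSpace (A μ)) := by
    intro μ hμ
    have hδ : 0 < delta (hherm μ hμ) := delta_pos _ (hAinv μ hμ)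
    have hf : ContinuousOn (fun t => ∑ i, ∑ j, |A t i j - A μ i j|) (Set.Icc 0 1) := by
      refine continuousOn_finset_sum _ fun i _ => continuousOn_finset_sum _ fun j _ => ?_
      have he : ContinuousOn (fun t => A t i j) (Set.Icc (0:ℝ) 1) := by
        have h1 : Continuous (fun m : Matrix (Fin N) (Fin N) ℝ => m i j) :=
          (continuous_apply j).comp (continuous_apply i)
        exact h1.comp_continuousOn hAcont
      exact (he.sub continuousOn_const).abs
    have hmem0 : (fun t => ∑ i, ∑ j, |A t i j - A μ i j|) ⁻¹' (Set.Iio (delta (hherm μ hμ)))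
        ∈ nhdsWithin μ (Set.Icc 0 1) := by
      apply hf μ hμ
      apply Iio_mem_nhds
      simpa using hδ
    rw [Metric.mem_nhdsWithin_iff] at hmem0
    obtain ⟨ε, hε, hsub⟩ := hmem0
    refine ⟨ε, hε, fun t ht hd => ?_⟩
    have hsm : ∑ i, ∑ j, |A t i j - A μ i j| < delta (hherm μ hμ) :=
      hsub ⟨by rw [Metric.mem_ball, Real.dist_eq]; exact hd, ht⟩
    have hsmall : ∑ i, ∑ j, |A t i j - A μ i j|
        < delta (hherm t ht) + delta (hherm μ hμ) := by
      have := delta_pos (hherm t ht) (hAinv t ht)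
      linarith
    exact local_equi (hherm t ht) (hherm μ hμ) (hAinv t ht) (hAinv μ hμ) ρ
      (fun g => hcomm g t ht) (fun g => hcomm g μ hμ) hsmall
  haveI : PreconnectedSpace (Set.Icc (0:ℝ) 1) :=
    isPreconnected_iff_preconnectedSpace.1 isPreconnected_Icc
  have h01 : (0:ℝ) ∈ Set.Icc (0:ℝ) 1 := ⟨le_refl 0, zero_le_one⟩
  have h11 : (1:ℝ) ∈ Set.Icc (0:ℝ) 1 := ⟨zero_le_one, le_refl 1⟩
  set S : Set (Set.Icc (0:ℝ) 1) :=
    {t | Equi ρ (negEigSpace (A 0)) (negEigSpace (A ↑t))} with hS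
  have hiff : ∀ μ : Set.Icc (0:ℝ) 1, ∃ ε > 0, ∀ t : Set.Icc (0:ℝ) 1,
      dist t μ < ε → (t ∈ S ↔ μ ∈ S) := by
    intro μ
    obtain ⟨ε, hε, h⟩ := hloc ↑μ μ.2
    refine ⟨ε, hε, fun t hd => ?_⟩
    have hd' : |(↑t : ℝ) - ↑μ| < ε := by
      rw [← Real.dist_eq, ← Subtype.dist_eq]
      exact hd
    have het := h ↑t t.2 hd'
    have hinvt : ∀ (g : G) (x : Fin N → ℝ), x ∈ negEigSpace (A ↑t) →
        (ρ g : Matrix (Fin N) (Fin N) ℝ) *ᵥ x ∈ negEigSpace (A ↑t) :=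
      fun g x hx => negEigSpace_inv (hherm ↑t t.2) _ (hcomm g ↑t t.2) hx
    constructor
    · intro hts
      exact equi_trans hts het
    · intro hμs
      exact equi_trans hμs (equi_symm hinvt het)
  have hopen : IsOpen S := by
    rw [Metric.isOpen_iff]
    intro t htS
    obtain ⟨ε, hε, h⟩ := hiff t
    exact ⟨ε, hε, fun u hu => (h u (Metric.mem_ball.1 hu)).2 htS⟩
  have hclosed : IsClosed S := by
    rw [← isOpen_compl_iff, Metric.isOpen_iff]
    intro t htS
    obtain ⟨ε, hε, h⟩ := hiff t
    exact ⟨ε, hε, fun u hu hus => htS ((h u (Metric.mem_ball.1 hu)).1 hus)⟩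
  have hne : S.Nonempty := ⟨⟨0, h01⟩, equi_refl ρ _⟩
  have huniv : S = Set.univ := IsClopen.eq_univ ⟨hclosed, hopen⟩ hne
  have h1S : (⟨1, h11⟩ : Set.Icc (0:ℝ) 1) ∈ S := huniv ▸ Set.mem_univ _
  exact h1S

end NegEig

/-- Let `A : [0,1] → Sym(N, ℝ)` be a continuous path of symmetric invertible matrices
and let a group `G` act on `ℝᴺ` by orthogonal matrices commuting with every `A(λ)`.
Then the negative eigenspaces `E⁻(A(0))` and `E⁻(A(1))` are isomorphic as
`G`-representations. -/
theorem negEigSpace_iso_of_invertible_path (N : ℕ) {G : Type*} [Group G]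
    (ρ : G →* Matrix.orthogonalGroup (Fin N) ℝ)
    (A : ℝ → Matrix (Fin N) (Fin N) ℝ)
    (hAcont : ContinuousOn A (Set.Icc 0 1))
    (hAsymm : ∀ lam ∈ Set.Icc (0 : ℝ) 1, (A lam).IsSymm)
    (hAinv : ∀ lam ∈ Set.Icc (0 : ℝ) 1, IsUnit (A lam))
    (hcomm : ∀ (g : G), ∀ lam ∈ Set.Icc (0 : ℝ) 1,
      (ρ g : Matrix (Fin N) (Fin N) ℝ) * A lam = A lam * (ρ g : Matrix (Fin N) (Fin N) ℝ)) :
    ∃ e : negEigSpace (A 0) ≃ₗ[ℝ] negEigSpace (A 1),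
      ∀ (g : G) (x : Fin N → ℝ) (hx : x ∈ negEigSpace (A 0))
        (hgx : (ρ g : Matrix (Fin N) (Fin N) ℝ) *ᵥ x ∈ negEigSpace (A 0)),
        (e ⟨(ρ g : Matrix (Fin N) (Fin N) ℝ) *ᵥ x, hgx⟩ : Fin N → ℝ) =
          (ρ g : Matrix (Fin N) (Fin N) ℝ) *ᵥ (e ⟨x, hx⟩ : Fin N → ℝ) := by
  obtain ⟨e, he⟩ := NegEig.main_thm N ρ A hAcont hAsymm hAinv hcomm
  exact ⟨e, he⟩
end

section
/- Let n ∈ ℕ, let J be the standard symplectic 2n × 2n matrix given in block form by J = [[0, −Iₙ], [Iₙ, 0]], and let S : [0,1] → Matrix(2n, 2n, ℝ) be continuous with each S(λ) symmetric. For k ≥ 1 define A_k(λ) = [[(1/k)·S(λ), J], [−J, (1/k)·S(λ)]], for Θ ∈ ℝ define R_k(Θ) = [[cos(kΘ)·I₂ₙ, −sin(kΘ)·I₂ₙ], [sin(kΘ)·I₂ₙ, cos(kΘ)·I₂ₙ]], and let G₀ be a group of 2n × 2n orthogonal matrices g satisfying gᵀ·J·g = J and g·S(λ) = S(λ)·g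 for all λ ∈ [0,1]. For a symmetric matrix B let E⁻(B) denote the sum of the eigenspaces of B for all negative eigenvalues. Then there exists m₀ ∈ ℕ such that for every integer k > m₀ there is a linear equivalence from E⁻(A_k(0)) onto E⁻(A_k(1)) that commutes with R_k(Θ) for every Θ ∈ ℝ and with diag(g, g) = [[g, 0], [0, g]] for every g ∈ G₀; that is, for all but finitely many k, E⁻(A_k(0)) and E⁻(A_k(1)) are isomorphic as representations of G₀ × S¹. -/
open Matrix

/-- The `4n × 4n` block matrix `A_k(λ) = [[(1/k)·S(λ), J], [−J, (1/k)·S(λ)]]`. -/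
noncomputable def Amat (n : ℕ) (k : ℕ)
    (J S : Matrix (Fin n ⊕ Fin n) (Fin n ⊕ Fin n) ℝ) :
    Matrix ((Fin n ⊕ Fin n) ⊕ (Fin n ⊕ Fin n)) ((Fin n ⊕ Fin n) ⊕ (Fin n ⊕ Fin n)) ℝ :=
  Matrix.fromBlocks ((1 / (k : ℝ)) • S) J (-J) ((1 / (k : ℝ)) • S)

/-- The `4n × 4n` rotation block matrix
`R_k(Θ) = [[cos(kΘ)·I₂ₙ, −sin(kΘ)·I₂ₙ], [sin(kΘ)·I₂ₙ, cos(kΘ)·I₂ₙ]]`. -/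
noncomputable def Rmat (n : ℕ) (k : ℕ) (Θ : ℝ) :
    Matrix ((Fin n ⊕ Fin n) ⊕ (Fin n ⊕ Fin n)) ((Fin n ⊕ Fin n) ⊕ (Fin n ⊕ Fin n)) ℝ :=
  Matrix.fromBlocks (Real.cos (k * Θ) • 1) (-(Real.sin (k * Θ)) • 1)
    (Real.sin (k * Θ) • 1) (Real.cos (k * Θ) • 1)

open Module
open scoped RealInnerProductSpace

set_option maxHeartbeats 1000000
set_option linter.unusedSectionVars false

noncomputable def posEigSpace {ι : Type*} [Fintype ι] [DecidableEq ι]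
    (B : Matrix ι ι ℝ) : Submodule ℝ (ι → ℝ) :=
  ⨆ (μ : ℝ) (_ : 0 ≤ μ), Module.End.eigenspace (Matrix.toLin' B) μ

variable {ι : Type*} [Fintype ι] [DecidableEq ι]

/-- orthogonality to eigenvectors with eigenvalue outside the defining set -/
lemma sup_orth {B : Matrix ι ι ℝ} (hB : B.IsHermitian) (P : ℝ → Prop) {x : EuclideanSpace ℝ ι}
    (hx : x ∈ ⨆ (ν : ℝ) (_ : P ν), Module.End.eigenspace (Matrix.toEuclideanLin B) ν)
    {μ : ℝ} (hμ : ¬ P μ) {v : EuclideanSpace ℝ ι}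
    (hv : v ∈ Module.End.eigenspace (Matrix.toEuclideanLin B) μ) :
    ⟪v, x⟫ = 0 := by
  have hT : (Matrix.toEuclideanLin B).IsSymmetric := (Matrix.isHermitian_iff_isSymmetric).1 hB
  have hle : (⨆ (ν : ℝ) (_ : P ν), Module.End.eigenspace (Matrix.toEuclideanLin B) ν) ≤
      (Module.End.eigenspace (Matrix.toEuclideanLin B) μ)ᗮ := by
    refine iSup₂_le fun ν hν => ?_
    intro y hy
    rw [Submodule.mem_orthogonal]
    intro u hu
    have hne : μ ≠ ν := fun h => hμ (h ▸ hν)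
    exact hT.orthogonalFamily_eigenspaces hne ⟨u, hu⟩ ⟨y, hy⟩
  exact (Submodule.mem_orthogonal _ _).1 (hle hx) v hv

lemma toLp_mem_iSup_eig {κ : Sort*} (B : Matrix ι ι ℝ) (f : κ → ℝ) {x : ι → ℝ}
    (hx : x ∈ ⨆ i, Module.End.eigenspace (Matrix.toLin' B) (f i)) :
    WithLp.toLp 2 x ∈ ⨆ i, Module.End.eigenspace (Matrix.toEuclideanLin B) (f i) := by
  refine Submodule.iSup_induction _ (motive := fun y => WithLp.toLp 2 y ∈
    ⨆ i, Module.End.eigenspace (Matrix.toEuclideanLin B) (f i)) hx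
    (fun i y hy => ?_) (by rw [WithLp.toLp_zero]; exact zero_mem _) (fun y z hy hz => ?_)
  · refine Submodule.mem_iSup_of_mem i ?_
    rw [Module.End.mem_eigenspace_iff] at hy ⊢
    show WithLp.toLp 2 (Matrix.toLin' B y) = _
    rw [hy, WithLp.toLp_smul]
  · show WithLp.toLp 2 (y + z) ∈ _
    rw [WithLp.toLp_add]
    exact add_mem hy hz

lemma ofLp_mem_iSup_eig {κ : Sort*} (B : Matrix ι ι ℝ) (f : κ → ℝ) {x : EuclideanSpace ℝ ι}
    (hx : x ∈ ⨆ i, Module.End.eigenspace (Matrix.toEuclideanLin B) (f i)) :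
    WithLp.ofLp x ∈ ⨆ i, Module.End.eigenspace (Matrix.toLin' B) (f i) := by
  refine Submodule.iSup_induction _ (motive := fun y => WithLp.ofLp y ∈
    ⨆ i, Module.End.eigenspace (Matrix.toLin' B) (f i)) hx
    (fun i y hy => ?_) (by rw [WithLp.ofLp_zero]; exact zero_mem _) (fun y z hy hz => ?_)
  · refine Submodule.mem_iSup_of_mem i ?_
    rw [Module.End.mem_eigenspace_iff] at hy ⊢
    have := congrArg WithLp.ofLp hy
    rw [WithLp.ofLp_smul] at this
    exact this
  · show WithLp.ofLp (y + z) ∈ _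
    rw [WithLp.ofLp_add]
    exact add_mem hy hz

lemma inner_toEuclideanLin_dotProduct (B : Matrix ι ι ℝ) (x : ι → ℝ) :
    ⟪Matrix.toEuclideanLin B (WithLp.toLp 2 x : EuclideanSpace ℝ ι), (WithLp.toLp 2 x : EuclideanSpace ℝ ι)⟫ =
      (B *ᵥ x) ⬝ᵥ x := by
  simp [PiLp.inner_apply, RCLike.inner_apply, dotProduct, mul_comm]

lemma quad_sum {B : Matrix ι ι ℝ} (hB : B.IsHermitian) (x : EuclideanSpace ℝ ι) :
    ⟪Matrix.toEuclideanLin B x, x⟫ =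
      ∑ i, ((Matrix.isHermitian_iff_isSymmetric.1 hB).eigenvalues finrank_euclideanSpace i) *
        (((Matrix.isHermitian_iff_isSymmetric.1 hB).eigenvectorBasis finrank_euclideanSpace).repr x i)^2 := by
  set hT := Matrix.isHermitian_iff_isSymmetric.1 hB
  set b := hT.eigenvectorBasis finrank_euclideanSpace with hb
  have h1 : ∀ v : EuclideanSpace ℝ ι, ⟪v, x⟫ = ∑ i, b.repr v i * b.repr x i := by
    intro v
    conv_lhs => rw [← b.sum_repr' v]
    rw [sum_inner]
    refine Finset.sum_congr rfl fun i _ => ?_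
    rw [real_inner_smul_left, b.repr_apply_apply, b.repr_apply_apply]
  rw [h1]
  refine Finset.sum_congr rfl fun i _ => ?_
  rw [hT.eigenvectorBasis_apply_self_apply]
  show hT.eigenvalues finrank_euclideanSpace i * b.repr x i * b.repr x i =
    hT.eigenvalues finrank_euclideanSpace i * b.repr x i ^ 2
  ring

lemma quad_nonpos {B : Matrix ι ι ℝ} (hB : B.IsSymm) {x : ι → ℝ}
    (hx : x ∈ negEigSpace B) : (B *ᵥ x) ⬝ᵥ x ≤ 0 := by
  have hH : B.IsHermitian := by rwa [Matrix.IsHermitian, conjTranspose_eq_transpose_of_trivial]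
  set hT := Matrix.isHermitian_iff_isSymmetric.1 hH with hhT
  set b := hT.eigenvectorBasis finrank_euclideanSpace with hb
  have hx' : (WithLp.toLp 2 x : EuclideanSpace ℝ ι) ∈
      ⨆ (ν : ℝ) (_ : ν < 0), Module.End.eigenspace (Matrix.toEuclideanLin B) ν := by
    rw [iSup_subtype']
    rw [negEigSpace, iSup_subtype'] at hx
    exact toLp_mem_iSup_eig B _ hx
  rw [← inner_toEuclideanLin_dotProduct, quad_sum hH]
  refine Finset.sum_nonpos fun i _ => ?_
  rcases lt_or_ge (hT.eigenvalues finrank_euclideanSpace i) 0 with h | h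
  · exact mul_nonpos_of_nonpos_of_nonneg h.le (sq_nonneg _)
  · have hzero : b.repr (WithLp.toLp 2 x : EuclideanSpace ℝ ι) i = 0 := by
      rw [b.repr_apply_apply]
      exact sup_orth hH (fun ν => ν < 0) hx' (not_lt.2 h)
        (hT.hasEigenvector_eigenvectorBasis finrank_euclideanSpace i).1
    rw [hzero]
    simp

lemma quad_nonneg {B : Matrix ι ι ℝ} (hB : B.IsSymm) {x : ι → ℝ}
    (hx : x ∈ posEigSpace B) : 0 ≤ (B *ᵥ x) ⬝ᵥ x := by
  have hH : B.IsHermitian := by rwa [Matrix.IsHermitian, conjTranspose_eq_transpose_of_trivial]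
  set hT := Matrix.isHermitian_iff_isSymmetric.1 hH with hhT
  set b := hT.eigenvectorBasis finrank_euclideanSpace with hb
  have hx' : (WithLp.toLp 2 x : EuclideanSpace ℝ ι) ∈
      ⨆ (ν : ℝ) (_ : 0 ≤ ν), Module.End.eigenspace (Matrix.toEuclideanLin B) ν := by
    rw [iSup_subtype']
    rw [posEigSpace, iSup_subtype'] at hx
    exact toLp_mem_iSup_eig B _ hx
  rw [← inner_toEuclideanLin_dotProduct, quad_sum hH]
  refine Finset.sum_nonneg fun i _ => ?_
  rcases le_or_gt 0 (hT.eigenvalues finrank_euclideanSpace i) with h | h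
  · exact mul_nonneg h (sq_nonneg _)
  · have hzero : b.repr (WithLp.toLp 2 x : EuclideanSpace ℝ ι) i = 0 := by
      rw [b.repr_apply_apply]
      exact sup_orth hH (fun ν => 0 ≤ ν) hx' (not_le.2 h)
        (hT.hasEigenvector_eigenvectorBasis finrank_euclideanSpace i).1
    rw [hzero]
    simp

lemma neg_sup_pos_eq_top {B : Matrix ι ι ℝ} (hB : B.IsSymm) :
    negEigSpace B ⊔ posEigSpace B = ⊤ := by
  have hH : B.IsHermitian := by rwa [Matrix.IsHermitian, conjTranspose_eq_transpose_of_trivial]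
  have hT := Matrix.isHermitian_iff_isSymmetric.1 hH
  have htop : (⨆ μ : ℝ, Module.End.eigenspace (Matrix.toEuclideanLin B) μ) = ⊤ :=
    Submodule.orthogonal_eq_bot_iff.1 hT.orthogonalComplement_iSup_eigenspaces_eq_bot
  have htop' : (⨆ μ : ℝ, Module.End.eigenspace (Matrix.toLin' B) μ) = ⊤ := by
    rw [eq_top_iff]
    intro x _
    have h : (WithLp.toLp 2 x : EuclideanSpace ℝ ι) ∈
        ⨆ μ : ℝ, Module.End.eigenspace (Matrix.toEuclideanLin B) μ := by
      rw [htop]; exact Submodule.mem_top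
    exact ofLp_mem_iSup_eig B (fun μ => μ) h
  rw [eq_top_iff, ← htop']
  refine iSup_le fun μ => ?_
  rcases lt_or_ge μ 0 with h | h
  · exact le_sup_of_le_left (le_iSup₂ (f := fun (ν : ℝ) (_ : ν < 0) => Module.End.eigenspace (Matrix.toLin' B) ν) μ h)
  · exact le_sup_of_le_right (le_iSup₂ (f := fun (ν : ℝ) (_ : 0 ≤ ν) => Module.End.eigenspace (Matrix.toLin' B) ν) μ h)

section Blocks

variable {τ : Type*} [Fintype τ] [DecidableEq τ]

/-- The constant block matrix `M = [[0, J], [−J, 0]]`. -/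
def Mblock (Jm : Matrix τ τ ℝ) : Matrix (τ ⊕ τ) (τ ⊕ τ) ℝ :=
  Matrix.fromBlocks 0 Jm (-Jm) 0

/-- The projection-like matrix `Q = (1 − M)/2`. -/
noncomputable def Qblock (Jm : Matrix τ τ ℝ) : Matrix (τ ⊕ τ) (τ ⊕ τ) ℝ :=
  (2⁻¹ : ℝ) • (1 - Mblock Jm)

noncomputable def Qpblock (Jm : Matrix τ τ ℝ) : Matrix (τ ⊕ τ) (τ ⊕ τ) ℝ :=
  (2⁻¹ : ℝ) • (1 + Mblock Jm)

/-- The `−1`-eigenspace of `M`. -/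
noncomputable def EminS (Jm : Matrix τ τ ℝ) : Submodule ℝ (τ ⊕ τ → ℝ) :=
  Module.End.eigenspace (Matrix.toLin' (Mblock Jm)) (-1)

noncomputable def EmaxS (Jm : Matrix τ τ ℝ) : Submodule ℝ (τ ⊕ τ → ℝ) :=
  Module.End.eigenspace (Matrix.toLin' (Mblock Jm)) 1

lemma mem_EminS_iff {Jm : Matrix τ τ ℝ} {x : τ ⊕ τ → ℝ} :
    x ∈ EminS Jm ↔ Mblock Jm *ᵥ x = -x := by
  rw [EminS, Module.End.mem_eigenspace_iff, Matrix.toLin'_apply, neg_smul, one_smul]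

lemma mem_EmaxS_iff {Jm : Matrix τ τ ℝ} {x : τ ⊕ τ → ℝ} :
    x ∈ EmaxS Jm ↔ Mblock Jm *ᵥ x = x := by
  rw [EmaxS, Module.End.mem_eigenspace_iff, Matrix.toLin'_apply, one_smul]

variable {Jm : Matrix τ τ ℝ}

lemma Mblock_sq (hJJ : Jm * Jm = -1) : Mblock Jm * Mblock Jm = 1 := by
  rw [Mblock, Matrix.fromBlocks_multiply]
  simp [Matrix.mul_neg, Matrix.neg_mul, hJJ, ← Matrix.fromBlocks_one]

lemma Mblock_mul_Qblock (hJJ : Jm * Jm = -1) : Mblock Jm * Qblock Jm = -Qblock Jm := by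
  rw [Qblock, Matrix.mul_smul, Matrix.mul_sub, Matrix.mul_one, Mblock_sq hJJ]
  rw [← smul_neg, neg_sub]

lemma Mblock_mul_Qpblock (hJJ : Jm * Jm = -1) : Mblock Jm * Qpblock Jm = Qpblock Jm := by
  rw [Qpblock, Matrix.mul_smul, Matrix.mul_add, Matrix.mul_one, Mblock_sq hJJ, add_comm]

lemma Qblock_mem (hJJ : Jm * Jm = -1) (x : τ ⊕ τ → ℝ) : Qblock Jm *ᵥ x ∈ EminS Jm := by
  rw [mem_EminS_iff, Matrix.mulVec_mulVec, Mblock_mul_Qblock hJJ, Matrix.neg_mulVec]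

lemma Qpblock_mem (hJJ : Jm * Jm = -1) (x : τ ⊕ τ → ℝ) : Qpblock Jm *ᵥ x ∈ EmaxS Jm := by
  rw [mem_EmaxS_iff, Matrix.mulVec_mulVec, Mblock_mul_Qpblock hJJ]

lemma Qblock_eq_zero {x : τ ⊕ τ → ℝ} (h : Qblock Jm *ᵥ x = 0) :
    Mblock Jm *ᵥ x = x := by
  rw [Qblock, Matrix.smul_mulVec, Matrix.sub_mulVec, Matrix.one_mulVec] at h
  have h2 : x - Mblock Jm *ᵥ x = 0 := by
    have := congrArg (fun v => (2 : ℝ) • v) h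
    simpa [smul_smul] using this
  linear_combination (norm := module) -h2

lemma Qpblock_eq_zero {x : τ ⊕ τ → ℝ} (h : Qpblock Jm *ᵥ x = 0) :
    Mblock Jm *ᵥ x = -x := by
  rw [Qpblock, Matrix.smul_mulVec, Matrix.add_mulVec, Matrix.one_mulVec] at h
  have h2 : x + Mblock Jm *ᵥ x = 0 := by
    have := congrArg (fun v => (2 : ℝ) • v) h
    simpa [smul_smul] using this
  linear_combination (norm := module) h2

end Blocks

section Dim

variable {τ : Type*} [Fintype τ] [DecidableEq τ] {Jm : Matrix τ τ ℝ}

lemma sum_elim_decomp (v : τ ⊕ τ → ℝ) : v = Sum.elim (v ∘ Sum.inl) (v ∘ Sum.inr) := by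
  funext z; cases z <;> rfl

lemma Mblock_mulVec (v : τ ⊕ τ → ℝ) :
    Mblock Jm *ᵥ v = Sum.elim (Jm *ᵥ (v ∘ Sum.inr)) (-(Jm *ᵥ (v ∘ Sum.inl))) := by
  conv_lhs => rw [sum_elim_decomp v]
  rw [Mblock, Matrix.fromBlocks_mulVec]
  simp [Matrix.neg_mulVec]

lemma EminS_snd {v : τ ⊕ τ → ℝ} (hv : Mblock Jm *ᵥ v = -v) :
    Jm *ᵥ (v ∘ Sum.inl) = v ∘ Sum.inr := by
  funext a
  have := congrFun (hv.symm.trans (Mblock_mulVec v)) (Sum.inr a)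
  simpa using (neg_eq_iff_eq_neg.1 this).symm

lemma EmaxS_snd {v : τ ⊕ τ → ℝ} (hv : Mblock Jm *ᵥ v = v) :
    -(Jm *ᵥ (v ∘ Sum.inl)) = v ∘ Sum.inr := by
  funext a
  exact (congrFun (hv.symm.trans (Mblock_mulVec v)) (Sum.inr a)).symm

/-- `y ↦ (y, J y)` as a linear map. -/
noncomputable def psiMin (Jm : Matrix τ τ ℝ) : (τ → ℝ) →ₗ[ℝ] (τ ⊕ τ → ℝ) where
  toFun y := Sum.elim y (Jm *ᵥ y)
  map_add' y z := by funext w; cases w <;> simp [Matrix.mulVec_add]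
  map_smul' c y := by funext w; cases w <;> simp [Matrix.mulVec_smul]

noncomputable def psiMax (Jm : Matrix τ τ ℝ) : (τ → ℝ) →ₗ[ℝ] (τ ⊕ τ → ℝ) where
  toFun y := Sum.elim y (-(Jm *ᵥ y))
  map_add' y z := by funext w; cases w <;> simp [Matrix.mulVec_add]; ring
  map_smul' c y := by funext w; cases w <;> simp [Matrix.mulVec_smul]

lemma psiMin_mem (hJJ : Jm * Jm = -1) (y : τ → ℝ) : psiMin Jm y ∈ EminS Jm := by
  have h1 : (psiMin Jm y) ∘ Sum.inl = y := rfl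
  have h2 : (psiMin Jm y) ∘ Sum.inr = Jm *ᵥ y := rfl
  rw [mem_EminS_iff, Mblock_mulVec, h1, h2, Matrix.mulVec_mulVec, hJJ]
  funext w
  cases w <;> simp [Matrix.neg_mulVec, psiMin]

lemma psiMax_mem (hJJ : Jm * Jm = -1) (y : τ → ℝ) : psiMax Jm y ∈ EmaxS Jm := by
  have h1 : (psiMax Jm y) ∘ Sum.inl = y := rfl
  have h2 : (psiMax Jm y) ∘ Sum.inr = -(Jm *ᵥ y) := rfl
  rw [mem_EmaxS_iff, Mblock_mulVec, h1, h2, Matrix.mulVec_neg, Matrix.mulVec_mulVec, hJJ]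
  funext w
  cases w <;> simp [Matrix.neg_mulVec, psiMax]

noncomputable def equivMin (hJJ : Jm * Jm = -1) : (τ → ℝ) ≃ₗ[ℝ] EminS Jm :=
  LinearEquiv.ofLinear
    (LinearMap.codRestrict (EminS Jm) (psiMin Jm) (psiMin_mem hJJ))
    ((LinearMap.funLeft ℝ ℝ Sum.inl).comp (Submodule.subtype (EminS Jm)))
    (by
      refine LinearMap.ext fun x => ?_
      have hx : Mblock Jm *ᵥ (x : τ ⊕ τ → ℝ) = -(x : τ ⊕ τ → ℝ) := mem_EminS_iff.1 x.2
      refine Subtype.ext ?_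
      show Sum.elim ((x : τ ⊕ τ → ℝ) ∘ Sum.inl) (Jm *ᵥ ((x : τ ⊕ τ → ℝ) ∘ Sum.inl)) = _
      rw [EminS_snd hx]
      exact (sum_elim_decomp _).symm)
    (by refine LinearMap.ext fun y => funext fun w => rfl)

noncomputable def equivMax (hJJ : Jm * Jm = -1) : (τ → ℝ) ≃ₗ[ℝ] EmaxS Jm :=
  LinearEquiv.ofLinear
    (LinearMap.codRestrict (EmaxS Jm) (psiMax Jm) (psiMax_mem hJJ))
    ((LinearMap.funLeft ℝ ℝ Sum.inl).comp (Submodule.subtype (EmaxS Jm)))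
    (by
      refine LinearMap.ext fun x => ?_
      have hx : Mblock Jm *ᵥ (x : τ ⊕ τ → ℝ) = (x : τ ⊕ τ → ℝ) := mem_EmaxS_iff.1 x.2
      refine Subtype.ext ?_
      show Sum.elim ((x : τ ⊕ τ → ℝ) ∘ Sum.inl) (-(Jm *ᵥ ((x : τ ⊕ τ → ℝ) ∘ Sum.inl))) = _
      rw [EmaxS_snd hx]
      exact (sum_elim_decomp _).symm)
    (by refine LinearMap.ext fun y => funext fun w => rfl)

lemma finrank_EminS (hJJ : Jm * Jm = -1) :
    Module.finrank ℝ (EminS Jm) = Fintype.card τ := by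
  rw [← (equivMin hJJ).finrank_eq, Module.finrank_pi]

lemma finrank_EmaxS (hJJ : Jm * Jm = -1) :
    Module.finrank ℝ (EmaxS Jm) = Fintype.card τ := by
  rw [← (equivMax hJJ).finrank_eq, Module.finrank_pi]

end Dim

section Bound

variable {κ : Type*} [Fintype κ]

lemma sq_le_dot (x : κ → ℝ) (p : κ) : x p * x p ≤ x ⬝ᵥ x := by
  rw [dotProduct]
  exact Finset.single_le_sum (f := fun r => x r * x r)
    (fun r _ => mul_self_nonneg _) (Finset.mem_univ p)

lemma abs_pair_le_dot (x : κ → ℝ) (p q : κ) : |x q * x p| ≤ x ⬝ᵥ x := by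
  have h1 := sq_le_dot x p
  have h2 := sq_le_dot x q
  have h3 : (0:ℝ) ≤ (|x q| - |x p|)^2 := sq_nonneg _
  have h4 : |x q * x p| = |x q| * |x p| := abs_mul _ _
  nlinarith [abs_nonneg (x q), abs_nonneg (x p), sq_abs (x q), sq_abs (x p)]

lemma dot_bound (Dm : Matrix κ κ ℝ) (x : κ → ℝ) :
    |(Dm *ᵥ x) ⬝ᵥ x| ≤ (∑ p, ∑ q, |Dm p q|) * (x ⬝ᵥ x) := by
  have key : ∀ p q, |Dm p q * x q * x p| ≤ |Dm p q| * (x ⬝ᵥ x) := by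
    intro p q
    rw [mul_assoc, abs_mul]
    exact mul_le_mul_of_nonneg_left (abs_pair_le_dot x p q) (abs_nonneg _)
  calc |(Dm *ᵥ x) ⬝ᵥ x| = |∑ p, ∑ q, Dm p q * x q * x p| := by
        rw [dotProduct]
        congr 1
        refine Finset.sum_congr rfl fun p _ => ?_
        rw [Matrix.mulVec, dotProduct, Finset.sum_mul]
    _ ≤ ∑ p, ∑ q, |Dm p q * x q * x p| := by
        refine (Finset.abs_sum_le_sum_abs _ _).trans ?_
        exact Finset.sum_le_sum fun p _ => Finset.abs_sum_le_sum_abs _ _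
    _ ≤ ∑ p, ∑ q, |Dm p q| * (x ⬝ᵥ x) := by
        exact Finset.sum_le_sum fun p _ => Finset.sum_le_sum fun q _ => key p q
    _ = (∑ p, ∑ q, |Dm p q|) * (x ⬝ᵥ x) := by
        rw [Finset.sum_mul]
        exact Finset.sum_congr rfl fun p _ => (Finset.sum_mul _ _ _).symm

end Bound

section Invariance

variable {κ : Type*} [Fintype κ] [DecidableEq κ]

lemma eigenspace_mulVec_mem {B C : Matrix κ κ ℝ} (h : C * B = B * C) {μ : ℝ}
    {x : κ → ℝ} (hx : x ∈ Module.End.eigenspace (Matrix.toLin' B) μ) :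
    C *ᵥ x ∈ Module.End.eigenspace (Matrix.toLin' B) μ := by
  rw [Module.End.mem_eigenspace_iff, Matrix.toLin'_apply] at hx ⊢
  rw [Matrix.mulVec_mulVec, ← h, ← Matrix.mulVec_mulVec, hx, Matrix.mulVec_smul]

lemma negEigSpace_mulVec_mem {B C : Matrix κ κ ℝ} (h : C * B = B * C)
    {x : κ → ℝ} (hx : x ∈ negEigSpace B) : C *ᵥ x ∈ negEigSpace B := by
  rw [negEigSpace, iSup_subtype'] at hx ⊢
  refine Submodule.iSup_induction _ (motive := fun y => C *ᵥ y ∈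
    ⨆ (μ : {μ : ℝ // μ < 0}), Module.End.eigenspace (Matrix.toLin' B) (μ : ℝ)) hx
    (fun μ y hy => ?_) (by simp) (fun y z hy hz => ?_)
  · exact Submodule.mem_iSup_of_mem μ (eigenspace_mulVec_mem h hy)
  · show C *ᵥ (y + z) ∈ _
    rw [Matrix.mulVec_add]
    exact Submodule.add_mem _ hy hz

end Invariance

section Master

variable {τ : Type*} [Fintype τ] [DecidableEq τ]

lemma dot_self_nonneg (x : τ ⊕ τ → ℝ) : 0 ≤ x ⬝ᵥ x :=
  Finset.sum_nonneg fun i _ => mul_self_nonneg _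

lemma master {Jm W : Matrix τ τ ℝ}
    (hJJ : Jm * Jm = -1) (hJt : Jmᵀ = -Jm) (hWs : W.IsSymm)
    {c : ℝ} (hc : c < 1)
    (hbound : ∀ x : τ ⊕ τ → ℝ, |((Matrix.fromBlocks W 0 0 W) *ᵥ x) ⬝ᵥ x| ≤ c * (x ⬝ᵥ x)) :
    ∃ f : negEigSpace (Matrix.fromBlocks W Jm (-Jm) W) ≃ₗ[ℝ] EminS Jm,
      ∀ x : negEigSpace (Matrix.fromBlocks W Jm (-Jm) W),
        (f x : τ ⊕ τ → ℝ) = Qblock Jm *ᵥ (x : τ ⊕ τ → ℝ) := by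
  set A := Matrix.fromBlocks W Jm (-Jm) W with hAdef
  have hA : A.IsSymm := by
    rw [Matrix.IsSymm, hAdef, Matrix.fromBlocks_transpose, Matrix.transpose_neg, hJt, hWs.eq,
      neg_neg]
  have hMA : A = Mblock Jm + Matrix.fromBlocks W 0 0 W := by
    rw [Mblock, Matrix.fromBlocks_add]
    simp [hAdef]
  -- injectivity of Q on the negative eigenspace
  have hinjneg : ∀ x ∈ negEigSpace A, Qblock Jm *ᵥ x = 0 → x = 0 := by
    intro x hx hQ
    have hMx : Mblock Jm *ᵥ x = x := Qblock_eq_zero hQ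
    have h1 : (A *ᵥ x) ⬝ᵥ x ≤ 0 := quad_nonpos hA hx
    have h2 : (A *ᵥ x) ⬝ᵥ x = x ⬝ᵥ x + ((Matrix.fromBlocks W 0 0 W) *ᵥ x) ⬝ᵥ x := by
      rw [hMA, Matrix.add_mulVec, add_dotProduct, hMx]
    have h3 := (abs_le.1 (hbound x)).1
    have h4 := dot_self_nonneg x
    have h5 : x ⬝ᵥ x = 0 := by nlinarith
    exact dotProduct_self_eq_zero.1 h5
  have hinjpos : ∀ x ∈ posEigSpace A, Qpblock Jm *ᵥ x = 0 → x = 0 := by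
    intro x hx hQ
    have hMx : Mblock Jm *ᵥ x = -x := Qpblock_eq_zero hQ
    have h1 : 0 ≤ (A *ᵥ x) ⬝ᵥ x := quad_nonneg hA hx
    have h2 : (A *ᵥ x) ⬝ᵥ x = -(x ⬝ᵥ x) + ((Matrix.fromBlocks W 0 0 W) *ᵥ x) ⬝ᵥ x := by
      rw [hMA, Matrix.add_mulVec, add_dotProduct, hMx, neg_dotProduct]
    have h3 := (abs_le.1 (hbound x)).2
    have h4 := dot_self_nonneg x
    have h5 : x ⬝ᵥ x = 0 := by nlinarith
    exact dotProduct_self_eq_zero.1 h5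
  -- the restricted maps
  set lneg : negEigSpace A →ₗ[ℝ] EminS Jm :=
    LinearMap.codRestrict (EminS Jm)
      ((Matrix.mulVecLin (Qblock Jm)).comp (Submodule.subtype (negEigSpace A)))
      (fun x => Qblock_mem hJJ _) with hlneg
  set lpos : posEigSpace A →ₗ[ℝ] EmaxS Jm :=
    LinearMap.codRestrict (EmaxS Jm)
      ((Matrix.mulVecLin (Qpblock Jm)).comp (Submodule.subtype (posEigSpace A)))
      (fun x => Qpblock_mem hJJ _) with hlpos
  have hlneg_inj : Function.Injective lneg := by
    intro x y hxy
    have hco : Qblock Jm *ᵥ (x : τ ⊕ τ → ℝ) = Qblock Jm *ᵥ (y : τ ⊕ τ → ℝ) :=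
      congrArg Subtype.val hxy
    have h0 : Qblock Jm *ᵥ ((x : τ ⊕ τ → ℝ) - y) = 0 := by
      rw [Matrix.mulVec_sub, hco, sub_self]
    exact Subtype.ext (sub_eq_zero.1
      (hinjneg _ (Submodule.sub_mem _ x.2 y.2) h0))
  have hlpos_inj : Function.Injective lpos := by
    intro x y hxy
    have hco : Qpblock Jm *ᵥ (x : τ ⊕ τ → ℝ) = Qpblock Jm *ᵥ (y : τ ⊕ τ → ℝ) :=
      congrArg Subtype.val hxy
    have h0 : Qpblock Jm *ᵥ ((x : τ ⊕ τ → ℝ) - y) = 0 := by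
      rw [Matrix.mulVec_sub, hco, sub_self]
    exact Subtype.ext (sub_eq_zero.1
      (hinjpos _ (Submodule.sub_mem _ x.2 y.2) h0))
  -- dimension count
  have hfneg_le : Module.finrank ℝ (negEigSpace A) ≤ Fintype.card τ :=
    (LinearMap.finrank_le_finrank_of_injective hlneg_inj).trans_eq (finrank_EminS hJJ)
  have hfpos_le : Module.finrank ℝ (posEigSpace A) ≤ Fintype.card τ :=
    (LinearMap.finrank_le_finrank_of_injective hlpos_inj).trans_eq (finrank_EmaxS hJJ)
  have hsup := neg_sup_pos_eq_top hA
  have heq := Submodule.finrank_sup_add_finrank_inf_eq (negEigSpace A) (posEigSpace A)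
  rw [hsup] at heq
  have htop : Module.finrank ℝ (⊤ : Submodule ℝ (τ ⊕ τ → ℝ)) =
      Fintype.card τ + Fintype.card τ := by
    rw [finrank_top, Module.finrank_pi, Fintype.card_sum]
  have hfneg : Module.finrank ℝ (negEigSpace A) = Fintype.card τ := by omega
  refine ⟨LinearMap.linearEquivOfInjective lneg hlneg_inj
    (by rw [hfneg, finrank_EminS hJJ]), fun x => ?_⟩
  rw [LinearMap.linearEquivOfInjective_apply]
  rfl

end Master

section Comm

variable {τ : Type*} [Fintype τ] [DecidableEq τ]

lemma comm_rot (a b : Matrix τ τ ℝ) (c d : ℝ) :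
    Matrix.fromBlocks (c • (1 : Matrix τ τ ℝ)) ((-d) • (1 : Matrix τ τ ℝ))
        (d • (1 : Matrix τ τ ℝ)) (c • (1 : Matrix τ τ ℝ)) *
      Matrix.fromBlocks a b (-b) a =
    Matrix.fromBlocks a b (-b) a *
      Matrix.fromBlocks (c • (1 : Matrix τ τ ℝ)) ((-d) • (1 : Matrix τ τ ℝ))
        (d • (1 : Matrix τ τ ℝ)) (c • (1 : Matrix τ τ ℝ)) := by
  rw [Matrix.fromBlocks_multiply, Matrix.fromBlocks_multiply]
  simp only [Matrix.smul_mul, Matrix.mul_smul, one_mul, mul_one, neg_smul, Matrix.mul_neg,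
    Matrix.neg_mul, smul_neg, neg_neg]
  congr 1 <;> abel

lemma comm_diag (g a b : Matrix τ τ ℝ) (h1 : g * a = a * g) (h2 : g * b = b * g) :
    Matrix.fromBlocks g 0 0 g * Matrix.fromBlocks a b (-b) a =
      Matrix.fromBlocks a b (-b) a * Matrix.fromBlocks g 0 0 g := by
  rw [Matrix.fromBlocks_multiply, Matrix.fromBlocks_multiply]
  simp [h1, h2, Matrix.mul_neg, Matrix.neg_mul]

lemma comm_Qblock {Jm : Matrix τ τ ℝ} {X : Matrix (τ ⊕ τ) (τ ⊕ τ) ℝ}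
    (h : X * Mblock Jm = Mblock Jm * X) : X * Qblock Jm = Qblock Jm * X := by
  rw [Qblock, Matrix.mul_smul, Matrix.smul_mul, Matrix.mul_sub, Matrix.sub_mul,
    Matrix.mul_one, Matrix.one_mul, h]

end Comm

/-- Let `J` be the standard symplectic `2n × 2n` matrix, `S : [0,1] → Sym(2n, ℝ)`
continuous, and `G₀` a group of orthogonal `2n × 2n` matrices preserving `J` and
commuting with every `S(λ)`. Then for all but finitely many `k`, the negative eigenspaces
`E⁻(A_k(0))` and `E⁻(A_k(1))` are isomorphic as representations of `G₀ × S¹`, i.e. there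
is a linear equivalence commuting with `R_k(Θ)` for every `Θ` and with `diag(g, g)` for
every `g ∈ G₀`. -/
theorem negEigSpace_Ak_iso_for_large_k (n : ℕ)
    (J : Matrix (Fin n ⊕ Fin n) (Fin n ⊕ Fin n) ℝ)
    (hJ : J = Matrix.fromBlocks 0 (-1) 1 0)
    (S : ℝ → Matrix (Fin n ⊕ Fin n) (Fin n ⊕ Fin n) ℝ)
    (hScont : ContinuousOn S (Set.Icc 0 1))
    (hSsymm : ∀ lam ∈ Set.Icc (0 : ℝ) 1, (S lam).IsSymm)
    (G₀ : Set (Matrix (Fin n ⊕ Fin n) (Fin n ⊕ Fin n) ℝ))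
    (hG₀ : ∀ g ∈ G₀, gᵀ * g = 1 ∧ gᵀ * J * g = J ∧
      ∀ lam ∈ Set.Icc (0 : ℝ) 1, g * S lam = S lam * g) :
    ∃ m₀ : ℕ, ∀ k : ℕ, m₀ < k →
      ∃ e : negEigSpace (Amat n k J (S 0)) ≃ₗ[ℝ] negEigSpace (Amat n k J (S 1)),
        (∀ (Θ : ℝ) (x : ((Fin n ⊕ Fin n) ⊕ (Fin n ⊕ Fin n)) → ℝ)
          (hx : x ∈ negEigSpace (Amat n k J (S 0)))
          (hRx : Rmat n k Θ *ᵥ x ∈ negEigSpace (Amat n k J (S 0))),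
          (e ⟨Rmat n k Θ *ᵥ x, hRx⟩ : ((Fin n ⊕ Fin n) ⊕ (Fin n ⊕ Fin n)) → ℝ) =
            Rmat n k Θ *ᵥ (e ⟨x, hx⟩ : ((Fin n ⊕ Fin n) ⊕ (Fin n ⊕ Fin n)) → ℝ)) ∧
        (∀ g ∈ G₀, ∀ (x : ((Fin n ⊕ Fin n) ⊕ (Fin n ⊕ Fin n)) → ℝ)
          (hx : x ∈ negEigSpace (Amat n k J (S 0)))
          (hgx : Matrix.fromBlocks g 0 0 g *ᵥ x ∈ negEigSpace (Amat n k J (S 0))),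
          (e ⟨Matrix.fromBlocks g 0 0 g *ᵥ x, hgx⟩ :
              ((Fin n ⊕ Fin n) ⊕ (Fin n ⊕ Fin n)) → ℝ) =
            Matrix.fromBlocks g 0 0 g *ᵥ
              (e ⟨x, hx⟩ : ((Fin n ⊕ Fin n) ⊕ (Fin n ⊕ Fin n)) → ℝ)) := by
  classical
  have h0mem : (0 : ℝ) ∈ Set.Icc (0 : ℝ) 1 := by norm_num
  have h1mem : (1 : ℝ) ∈ Set.Icc (0 : ℝ) 1 := by norm_num
  have hJJ : J * J = -1 := by
    rw [hJ, Matrix.fromBlocks_multiply]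
    simp [← Matrix.fromBlocks_one, Matrix.fromBlocks_neg]
  have hJt : Jᵀ = -J := by
    rw [hJ, Matrix.fromBlocks_transpose]
    simp [Matrix.fromBlocks_neg]
  set c0 : ℝ := ∑ i, ∑ j, |S 0 i j| with hc0def
  set c1 : ℝ := ∑ i, ∑ j, |S 1 i j| with hc1def
  have hc0nn : 0 ≤ c0 := Finset.sum_nonneg fun i _ => Finset.sum_nonneg fun j _ => abs_nonneg _
  have hc1nn : 0 ≤ c1 := Finset.sum_nonneg fun i _ => Finset.sum_nonneg fun j _ => abs_nonneg _
  refine ⟨⌈2 * c0 + 2 * c1⌉₊, fun k hk => ?_⟩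
  have hkR : (2 * c0 + 2 * c1) < (k : ℝ) := by
    calc 2 * c0 + 2 * c1 ≤ (⌈2 * c0 + 2 * c1⌉₊ : ℝ) := Nat.le_ceil _
      _ < (k : ℝ) := by exact_mod_cast hk
  have hkpos : (0 : ℝ) < (k : ℝ) := lt_of_le_of_lt (by positivity) hkR
  -- the bounds for λ = 0, 1
  have hbound : ∀ lam : ℝ, lam ∈ Set.Icc (0:ℝ) 1 →
      (∑ i, ∑ j, |S lam i j|) ≤ c0 + c1 → ∀ x : ((Fin n ⊕ Fin n) ⊕ (Fin n ⊕ Fin n)) → ℝ,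
      |((Matrix.fromBlocks ((1 / (k : ℝ)) • S lam) 0 0 ((1 / (k : ℝ)) • S lam)) *ᵥ x) ⬝ᵥ x| ≤
        (∑ p, ∑ q, |Matrix.fromBlocks ((1 / (k : ℝ)) • S lam) 0 0 ((1 / (k : ℝ)) • S lam) p q|)
          * (x ⬝ᵥ x) :=
    fun lam _ _ x => dot_bound _ x
  have hsumlt : ∀ lam : ℝ, (∑ i, ∑ j, |S lam i j|) ≤ c0 + c1 →
      (∑ p, ∑ q, |Matrix.fromBlocks ((1 / (k : ℝ)) • S lam) 0 0 ((1 / (k : ℝ)) • S lam) p q|)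
        < 1 := by
    intro lam hle
    have habs : ∀ i j : Fin n ⊕ Fin n, |((1 / (k : ℝ)) • S lam) i j| =
        (1 / (k : ℝ)) * |S lam i j| := by
      intro i j
      rw [Matrix.smul_apply, smul_eq_mul, abs_mul, abs_of_pos (by positivity)]
    have hsum : (∑ p, ∑ q,
        |Matrix.fromBlocks ((1 / (k : ℝ)) • S lam) 0 0 ((1 / (k : ℝ)) • S lam) p q|) =
        (2 / (k : ℝ)) * (∑ i, ∑ j, |S lam i j|) := by
      rw [Fintype.sum_sum_type]
      simp only [Fintype.sum_sum_type, Matrix.fromBlocks_apply₁₁, Matrix.fromBlocks_apply₁₂,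
        Matrix.fromBlocks_apply₂₁, Matrix.fromBlocks_apply₂₂, Matrix.zero_apply, abs_zero,
        habs]
      rw [← Finset.sum_add_distrib]
      simp only [Finset.sum_add_distrib, ← Finset.mul_sum, Finset.sum_const_zero]
      ring
    rw [hsum, div_mul_eq_mul_div, div_lt_one hkpos]
    nlinarith [Finset.sum_nonneg (fun (i : Fin n ⊕ Fin n) (_ : i ∈ Finset.univ) =>
      Finset.sum_nonneg fun (j : Fin n ⊕ Fin n) (_ : j ∈ Finset.univ) =>
        abs_nonneg (S lam i j))]
  have hW0s : ((1 / (k : ℝ)) • S 0).IsSymm := (hSsymm 0 h0mem).smul _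
  have hW1s : ((1 / (k : ℝ)) • S 1).IsSymm := (hSsymm 1 h1mem).smul _
  have hle0 : (∑ i, ∑ j, |S 0 i j|) ≤ c0 + c1 := by rw [← hc0def]; linarith
  have hle1 : (∑ i, ∑ j, |S 1 i j|) ≤ c0 + c1 := by rw [← hc1def]; linarith
  obtain ⟨f0, hf0⟩ := master (W := (1 / (k : ℝ)) • S 0) hJJ hJt hW0s
    (hsumlt 0 hle0) (fun x => dot_bound _ x)
  obtain ⟨f1, hf1⟩ := master (W := (1 / (k : ℝ)) • S 1) hJJ hJt hW1s
    (hsumlt 1 hle1) (fun x => dot_bound _ x)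
  set A0 := Amat n k J (S 0) with hA0
  set A1 := Amat n k J (S 1) with hA1
  have hA0eq : A0 = Matrix.fromBlocks ((1 / (k : ℝ)) • S 0) J (-J) ((1 / (k : ℝ)) • S 0) := rfl
  have hA1eq : A1 = Matrix.fromBlocks ((1 / (k : ℝ)) • S 1) J (-J) ((1 / (k : ℝ)) • S 1) := rfl
  set e := (f0.trans f1.symm : negEigSpace A0 ≃ₗ[ℝ] negEigSpace A1) with hedef
  have hQe : ∀ y : negEigSpace A0,
      Qblock J *ᵥ (e y : ((Fin n ⊕ Fin n) ⊕ (Fin n ⊕ Fin n)) → ℝ) =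
        Qblock J *ᵥ (y : ((Fin n ⊕ Fin n) ⊕ (Fin n ⊕ Fin n)) → ℝ) := by
    intro y
    have h2 := hf1 (f1.symm (f0 y))
    rw [f1.apply_symm_apply] at h2
    have he : (e y : ((Fin n ⊕ Fin n) ⊕ (Fin n ⊕ Fin n)) → ℝ) =
        (f1.symm (f0 y) : ((Fin n ⊕ Fin n) ⊕ (Fin n ⊕ Fin n)) → ℝ) := rfl
    rw [he, ← h2, hf0 y]
  have huniq : ∀ u v : negEigSpace A1,
      Qblock J *ᵥ (u : ((Fin n ⊕ Fin n) ⊕ (Fin n ⊕ Fin n)) → ℝ) =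
        Qblock J *ᵥ (v : ((Fin n ⊕ Fin n) ⊕ (Fin n ⊕ Fin n)) → ℝ) → u = v := by
    intro u v huv
    exact f1.injective (Subtype.ext (by rw [hf1 u, hf1 v]; exact huv))
  have hmain : ∀ X : Matrix ((Fin n ⊕ Fin n) ⊕ (Fin n ⊕ Fin n))
      ((Fin n ⊕ Fin n) ⊕ (Fin n ⊕ Fin n)) ℝ, X * A1 = A1 * X →
      X * Qblock J = Qblock J * X →
      ∀ (x : ((Fin n ⊕ Fin n) ⊕ (Fin n ⊕ Fin n)) → ℝ) (hx : x ∈ negEigSpace A0)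
        (hXx : X *ᵥ x ∈ negEigSpace A0),
        (e ⟨X *ᵥ x, hXx⟩ : ((Fin n ⊕ Fin n) ⊕ (Fin n ⊕ Fin n)) → ℝ) =
          X *ᵥ (e ⟨x, hx⟩ : ((Fin n ⊕ Fin n) ⊕ (Fin n ⊕ Fin n)) → ℝ) := by
    intro X hX1 hXQ x hx hXx
    have hmem : X *ᵥ (e ⟨x, hx⟩ : ((Fin n ⊕ Fin n) ⊕ (Fin n ⊕ Fin n)) → ℝ) ∈
        negEigSpace A1 := negEigSpace_mulVec_mem hX1 (e ⟨x, hx⟩).2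
    have key : Qblock J *ᵥ (e ⟨X *ᵥ x, hXx⟩ : ((Fin n ⊕ Fin n) ⊕ (Fin n ⊕ Fin n)) → ℝ) =
        Qblock J *ᵥ (X *ᵥ (e ⟨x, hx⟩ : ((Fin n ⊕ Fin n) ⊕ (Fin n ⊕ Fin n)) → ℝ)) := by
      refine (hQe ⟨X *ᵥ x, hXx⟩).trans ?_
      show Qblock J *ᵥ (X *ᵥ x) = _
      rw [Matrix.mulVec_mulVec, Matrix.mulVec_mulVec, ← hXQ, ← Matrix.mulVec_mulVec,
        ← Matrix.mulVec_mulVec]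
      exact congrArg (X *ᵥ ·) (hQe ⟨x, hx⟩).symm
    exact congrArg Subtype.val (huniq _ ⟨_, hmem⟩ key)
  refine ⟨e, ?_, ?_⟩
  · -- rotations
    intro Θ x hx hRx
    have hRdef : Rmat n k Θ = Matrix.fromBlocks (Real.cos ((k : ℝ) * Θ) • 1)
        ((-(Real.sin ((k : ℝ) * Θ))) • 1) (Real.sin ((k : ℝ) * Θ) • 1)
        (Real.cos ((k : ℝ) * Θ) • 1) := rfl
    have hRA1 : Rmat n k Θ * A1 = A1 * Rmat n k Θ := by
      rw [hRdef, hA1eq]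
      exact comm_rot _ J _ _
    have hRM : Rmat n k Θ * Mblock J = Mblock J * Rmat n k Θ := by
      rw [hRdef, Mblock]
      exact comm_rot 0 J _ _
    exact hmain _ hRA1 (comm_Qblock hRM) x hx hRx
  · -- the group G₀
    intro g hgmem x hx hgx
    obtain ⟨hg1, hg2, hg3⟩ := hG₀ g hgmem
    have hggt : g * gᵀ = 1 := mul_eq_one_comm.mp hg1
    have hgJ : g * J = J * g := by
      calc g * J = g * (gᵀ * J * g) := by rw [hg2]
        _ = g * gᵀ * J * g := by rw [← Matrix.mul_assoc, ← Matrix.mul_assoc]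
        _ = J * g := by rw [hggt, Matrix.one_mul]
    have hgW1 : g * ((1 / (k : ℝ)) • S 1) = ((1 / (k : ℝ)) • S 1) * g := by
      rw [Matrix.mul_smul, Matrix.smul_mul, hg3 1 h1mem]
    have hDA1 : Matrix.fromBlocks g 0 0 g * A1 = A1 * Matrix.fromBlocks g 0 0 g := by
      rw [hA1eq]
      exact comm_diag g _ J hgW1 hgJ
    have hDM : Matrix.fromBlocks g 0 0 g * Mblock J = Mblock J * Matrix.fromBlocks g 0 0 g := by
      rw [Mblock]
      exact comm_diag g 0 J (by simp) hgJ
    exact hmain _ hDA1 (comm_Qblock hDM) x hx hgx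
end
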